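/- arXiv:1911.04535 — 4 statements merged into one kernel-verified Lean document; each statement's English description precedes it below -/
import Mathlib

section
/- Let d ≥ 1, let g : Matrix (Fin d) (Fin d) ℝ be a symmetric matrix, and Ψ : Fin d → Fin d → Fin d → ℝ. Then the following are equivalent: (i) for all covectors ξ, ζ, χ : Fin d → ℝ, ∑_{λ,μ,ν} Ψ λ μ ν * ((if λ = μ then ξ ν else 0) + (if λ = ν then ζ μ else 0) + χ λ * g μ ν) = 0 (i.e. the pairing of Ψ with every general vectorial shift N^λ_{μν} = δ^λ_μ ξ_ν + δ^λ_ν ζ_μ + χ^λ g_{μν} vanishes); (ii) all three contractions of Ψ vanish identically: ∑_λ Ψ λ λ ν = 0 for all ν, ∑_λ Ψ λ μ λ = 0 for all μ, and ∑_{μ,ν} Ψ λ μ ν * g μ ν = 0 for all λ. -/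
lemma key_4 (d : ℕ) (g : Matrix (Fin d) (Fin d) ℝ) (Ψ : Fin d → Fin d → Fin d → ℝ)
    (ξ ζ χ : Fin d → ℝ) :
    (∑ l, ∑ m, ∑ k, Ψ l m k *
        ((if l = m then ξ k else 0) + (if l = k then ζ m else 0) + χ l * g m k)) =
    (∑ k, (∑ l, Ψ l l k) * ξ k) + (∑ m, (∑ l, Ψ l m l) * ζ m) +
    (∑ l, χ l * (∑ m, ∑ k, Ψ l m k * g m k)) := by
  simp only [mul_add, Finset.sum_add_distrib, mul_ite, mul_zero]
  congr 1
  · congr 1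
    · have h1 : (∑ l, ∑ m, ∑ k, if l = m then Ψ l m k * ξ k else 0)
          = ∑ l, ∑ k, Ψ l l k * ξ k := by
        refine Finset.sum_congr rfl fun l _ => ?_
        rw [Finset.sum_comm]
        refine Finset.sum_congr rfl fun k _ => ?_
        simp
      rw [h1, Finset.sum_comm]
      simp [Finset.sum_mul]
    · have h2 : (∑ l, ∑ m, ∑ k, if l = k then Ψ l m k * ζ m else 0)
          = ∑ l, ∑ m, Ψ l m l * ζ m := by
        refine Finset.sum_congr rfl fun l _ => ?_
        refine Finset.sum_congr rfl fun m _ => ?_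
        simp
      rw [h2, Finset.sum_comm]
      simp [Finset.sum_mul]
  · refine Finset.sum_congr rfl fun l _ => ?_
    rw [Finset.mul_sum]
    refine Finset.sum_congr rfl fun m _ => ?_
    rw [Finset.mul_sum]
    refine Finset.sum_congr rfl fun k _ => ?_
    ring

/-- Corollary 2: Ψ pairs to zero with every general vectorial shift
`N^λ_{μν} = δ^λ_μ ξ_ν + δ^λ_ν ζ_μ + χ^λ g_{μν}` iff all three of its
contractions vanish identically. -/
theorem stmt_4 (d : ℕ) (hd : 1 ≤ d) (g : Matrix (Fin d) (Fin d) ℝ)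
    (hg : ∀ i j, g i j = g j i) (Ψ : Fin d → Fin d → Fin d → ℝ) :
    (∀ ξ ζ χ : Fin d → ℝ,
      (∑ l, ∑ m, ∑ k, Ψ l m k *
        ((if l = m then ξ k else 0) + (if l = k then ζ m else 0) + χ l * g m k)) = 0) ↔
    ((∀ ν : Fin d, (∑ l, Ψ l l ν) = 0) ∧
     (∀ μ : Fin d, (∑ l, Ψ l μ l) = 0) ∧
     (∀ l : Fin d, (∑ m, ∑ k, Ψ l m k * g m k) = 0)) := by
  constructor
  · intro h
    refine ⟨fun ν => ?_, fun μ => ?_, fun l => ?_⟩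
    · have := h (Pi.single ν 1) 0 0
      rw [key_4] at this
      simpa [Pi.single_apply, Finset.sum_ite_eq'] using this
    · have := h 0 (Pi.single μ 1) 0
      rw [key_4] at this
      simpa [Pi.single_apply, Finset.sum_ite_eq'] using this
    · have := h 0 0 (Pi.single l 1)
      rw [key_4] at this
      simpa [Pi.single_apply, Finset.sum_ite_eq] using this
  · rintro ⟨h1, h2, h3⟩ ξ ζ χ
    rw [key_4]
    simp [h1, h2, h3]
end

section
/- Let d ≥ 1, let g : Matrix (Fin d) (Fin d) ℝ be symmetric with a symmetric inverse G (g * G = 1, G * g = 1), let λ₁, λ₂, λ₃ : ℝ, and Ψ : Fin d → Fin d → Fin d → ℝ. Then the following are equivalent: (i) for every covector v : Fin d → ℝ, ∑_{λ,μ,ν} Ψ λ μ ν * (λ₁ * (if λ = μ then v ν else 0) + λ₂ * (if λ = ν then v μ else 0) + λ₃ * (∑_ρ G λ ρ * v ρ) * g μ ν) = 0 (i.e. the pairing of Ψ with every constrained vectorial shift N^λ_{μν} = λ₁ δ^λ_μ v_ν + λ₂ δ^λ_ν v_μ + λ₃ v^λ g_{μν} vanishes, where v^λ = G^{λρ} v_ρ);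 (ii) for every ρ, λ₁ * (∑_λ Ψ λ λ ρ) + λ₂ * (∑_λ Ψ λ ρ λ) + λ₃ * (∑_{λ,μ,ν} G ρ λ * Ψ λ μ ν * g μ ν) = 0, i.e. the three (index-raised) traces of Ψ are linearly dependent with coefficients λ₁, λ₂, λ₃. -/
/-- Key identity: the pairing with the constrained shift built from `v` equals the
contraction of the trace combination against `v`. -/
theorem stmt_5_key (d : ℕ) (g G : Matrix (Fin d) (Fin d) ℝ)
    (hGsymm : ∀ i j, G i j = G j i)
    (l₁ l₂ l₃ : ℝ) (Ψ : Fin d → Fin d → Fin d → ℝ) (v : Fin d → ℝ) :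
      (∑ l, ∑ m, ∑ k, Ψ l m k *
        (l₁ * (if l = m then v k else 0) + l₂ * (if l = k then v m else 0)
          + l₃ * (∑ ρ, G l ρ * v ρ) * g m k))
      = ∑ ρ, (l₁ * (∑ l, Ψ l l ρ) + l₂ * (∑ l, Ψ l ρ l)
        + l₃ * (∑ l, ∑ m, ∑ k, G ρ l * Ψ l m k * g m k)) * v ρ := by
  simp only [mul_add, Finset.sum_add_distrib, add_mul, Finset.sum_mul, Finset.mul_sum,
    mul_ite, mul_zero]
  congr 1
  congr 1
  · -- l₁ term
    refine (Finset.sum_congr rfl fun l _ => Finset.sum_comm).trans ?_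
    simp only [Finset.sum_ite_eq, Finset.mem_univ, if_true]
    rw [Finset.sum_comm]
    exact Finset.sum_congr rfl fun k _ => Finset.sum_congr rfl fun l _ => by ring
  · -- l₂ term
    rw [Finset.sum_comm]
    refine Finset.sum_congr rfl fun m _ => ?_
    simp only [Finset.sum_ite_eq, Finset.mem_univ, if_true]
    exact Finset.sum_congr rfl fun l _ => by ring
  · -- l₃ term
    refine (Finset.sum_congr rfl fun l _ =>
      (Finset.sum_congr rfl fun m _ => Finset.sum_comm).trans Finset.sum_comm).trans
      (Finset.sum_comm.trans ?_)
    refine Finset.sum_congr rfl fun ρ _ => Finset.sum_congr rfl fun l _ =>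
      Finset.sum_congr rfl fun m _ => Finset.sum_congr rfl fun k _ => ?_
    rw [hGsymm ρ l]; ring

/-- Corollary 3: Ψ pairs to zero with every constrained vectorial shift
`N^λ_{μν} = λ₁ δ^λ_μ v_ν + λ₂ δ^λ_ν v_μ + λ₃ v^λ g_{μν}` (with `v^λ = G^{λρ} v_ρ`)
iff the three (index-raised) traces of Ψ are linearly dependent with coefficients
λ₁, λ₂, λ₃. -/
theorem stmt_5 (d : ℕ) (hd : 1 ≤ d) (g G : Matrix (Fin d) (Fin d) ℝ)
    (hgsymm : ∀ i j, g i j = g j i) (hGsymm : ∀ i j, G i j = G j i)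
    (hgG : g * G = 1) (hGg : G * g = 1)
    (l₁ l₂ l₃ : ℝ) (Ψ : Fin d → Fin d → Fin d → ℝ) :
    (∀ v : Fin d → ℝ,
      (∑ l, ∑ m, ∑ k, Ψ l m k *
        (l₁ * (if l = m then v k else 0) + l₂ * (if l = k then v m else 0)
          + l₃ * (∑ ρ, G l ρ * v ρ) * g m k)) = 0) ↔
    (∀ ρ : Fin d,
      l₁ * (∑ l, Ψ l l ρ) + l₂ * (∑ l, Ψ l ρ l)
        + l₃ * (∑ l, ∑ m, ∑ k, G ρ l * Ψ l m k * g m k) = 0) := by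
  constructor
  · intro h ρ
    have := h (Pi.single ρ 1)
    rw [stmt_5_key d g G hGsymm l₁ l₂ l₃ Ψ] at this
    simpa [Pi.single_apply, mul_ite, mul_zero, Finset.sum_ite_eq', eq_comm] using this
  · intro h v
    rw [stmt_5_key d g G hGsymm l₁ l₂ l₃ Ψ]
    simp [h]
end

section
/- Let n ≥ 1 and let b₁, b₂, b₃, a₁, a₂, a₃, a₄, a₅, c₁, c₂, c₃ : ℝ satisfy the projective-invariance constraints: 4(2a₁ + 2n·a₃ + a₅) − c₁ + (1 − n)c₂ = 0, 4(2a₂ + 2a₄ + n·a₅) + c₁ + (1 − n)c₃ = 0, and −2b₁ + b₂ + (1 − n)b₃ + 2(c₁ + n·c₂ + c₃) = 0. Let g : Matrix (Fin n) (Fin n) ℝ be symmetric with symmetric inverse G (g * G = 1, G * g = 1), let S : Fin n → Fin n → Fin n → ℝ satisfy S μ ν α = −S ν μ α, let Q : Fin n → Fin n → Fin n → ℝ satisfy Q α μ ν = Q α ν μ, and let ξ : Fin n → ℝ. Define the shifted tensors S' μ ν α := S μ ν α + (g α μ * ξ ν − g α ν * ξ μ)/2 and Q' α μ ν := Q α μ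 ν + 2 * ξ α * g μ ν. Then L(g, S', Q') = L(g, S, Q), where L is the general quadratic Lagrangian defined in the context. -/
/-- The general quadratic torsion–non-metricity Lagrangian
`L = b₁ S_{αμν}S^{αμν} + b₂ S_{αμν}S^{μνα} + b₃ S_μ S^μ
   + a₁ Q_{αμν}Q^{αμν} + a₂ Q_{αμν}Q^{μνα} + a₃ Q_μ Q^μ + a₄ q_μ q^μ + a₅ Q_μ q^μ
   + c₁ Q_{αμν}S^{αμν} + c₂ Q_μ S^μ + c₃ q_μ S^μ`,
with all indices raised by the inverse metric G (keeping index order). -/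
noncomputable def quadL (n : ℕ) (b₁ b₂ b₃ a₁ a₂ a₃ a₄ a₅ c₁ c₂ c₃ : ℝ)
    (G : Matrix (Fin n) (Fin n) ℝ) (S Q : Fin n → Fin n → Fin n → ℝ) : ℝ :=
  let up : (Fin n → Fin n → Fin n → ℝ) → Fin n → Fin n → Fin n → ℝ :=
    fun T α μ ν => ∑ a, ∑ b, ∑ c, G α a * G μ b * G ν c * T a b c
  let upv : (Fin n → ℝ) → Fin n → ℝ := fun v μ => ∑ a, G μ a * v a
  let Sv : Fin n → ℝ := fun μ => ∑ ν, ∑ α, G ν α * S μ ν α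
  let Qv : Fin n → ℝ := fun μ => ∑ ν, ∑ α, G ν α * Q μ ν α
  let qv : Fin n → ℝ := fun ν => ∑ α, ∑ μ, G α μ * Q α μ ν
  b₁ * (∑ α, ∑ μ, ∑ ν, S α μ ν * up S α μ ν)
    + b₂ * (∑ α, ∑ μ, ∑ ν, S α μ ν * up S μ ν α)
    + b₃ * (∑ μ, Sv μ * upv Sv μ)
    + a₁ * (∑ α, ∑ μ, ∑ ν, Q α μ ν * up Q α μ ν)
    + a₂ * (∑ α, ∑ μ, ∑ ν, Q α μ ν * up Q μ ν α)
    + a₃ * (∑ μ, Qv μ * upv Qv μ)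
    + a₄ * (∑ μ, qv μ * upv qv μ)
    + a₅ * (∑ μ, Qv μ * upv qv μ)
    + c₁ * (∑ α, ∑ μ, ∑ ν, Q α μ ν * up S α μ ν)
    + c₂ * (∑ μ, Qv μ * upv Sv μ)
    + c₃ * (∑ μ, qv μ * upv Sv μ)


namespace Stmt12Aux

open Finset

variable {n : ℕ}

noncomputable def up3 (G : Matrix (Fin n) (Fin n) ℝ) (T : Fin n → Fin n → Fin n → ℝ) :
    Fin n → Fin n → Fin n → ℝ :=
  fun α μ ν => ∑ a, ∑ b, ∑ c, G α a * G μ b * G ν c * T a b c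

noncomputable def upv (G : Matrix (Fin n) (Fin n) ℝ) (v : Fin n → ℝ) : Fin n → ℝ :=
  fun μ => ∑ a, G μ a * v a

noncomputable def v3 (G : Matrix (Fin n) (Fin n) ℝ) (T : Fin n → Fin n → Fin n → ℝ) : Fin n → ℝ :=
  fun μ => ∑ ν, ∑ α, G ν α * T μ ν α

noncomputable def q3 (G : Matrix (Fin n) (Fin n) ℝ) (T : Fin n → Fin n → Fin n → ℝ) : Fin n → ℝ :=
  fun ν => ∑ α, ∑ μ, G α μ * T α μ ν

noncomputable def vdot (G : Matrix (Fin n) (Fin n) ℝ) (v w : Fin n → ℝ) : ℝ :=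
  ∑ μ, v μ * upv G w μ

noncomputable def cub (G : Matrix (Fin n) (Fin n) ℝ) (A B : Fin n → Fin n → Fin n → ℝ) : ℝ :=
  ∑ α, ∑ μ, ∑ ν, A α μ ν * up3 G B α μ ν

noncomputable def cyc (G : Matrix (Fin n) (Fin n) ℝ) (A B : Fin n → Fin n → Fin n → ℝ) : ℝ :=
  ∑ α, ∑ μ, ∑ ν, A α μ ν * up3 G B μ ν α

noncomputable def Tl (g : Matrix (Fin n) (Fin n) ℝ) (ξ : Fin n → ℝ) :
    Fin n → Fin n → Fin n → ℝ :=
  fun μ ν α => (g α μ * ξ ν - g α ν * ξ μ) / 2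

noncomputable def Rl (g : Matrix (Fin n) (Fin n) ℝ) (ξ : Fin n → ℝ) :
    Fin n → Fin n → Fin n → ℝ :=
  fun α μ ν => 2 * ξ α * g μ ν

lemma pull4 (f : Fin n → Fin n → Fin n → Fin n → ℝ) :
    ∑ i, ∑ j, ∑ k, ∑ a, f i j k a = ∑ a, ∑ i, ∑ j, ∑ k, f i j k a := by
  calc ∑ i, ∑ j, ∑ k, ∑ a, f i j k a
      = ∑ i, ∑ j, ∑ a, ∑ k, f i j k a :=
        Finset.sum_congr rfl fun i _ => Finset.sum_congr rfl fun j _ => Finset.sum_comm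
    _ = ∑ i, ∑ a, ∑ j, ∑ k, f i j k a :=
        Finset.sum_congr rfl fun i _ => Finset.sum_comm
    _ = ∑ a, ∑ i, ∑ j, ∑ k, f i j k a := Finset.sum_comm

lemma swap33 (F : Fin n → Fin n → Fin n → Fin n → Fin n → Fin n → ℝ) :
    ∑ i, ∑ j, ∑ k, ∑ a, ∑ b, ∑ c, F i j k a b c
      = ∑ a, ∑ b, ∑ c, ∑ i, ∑ j, ∑ k, F i j k a b c := by
  calc ∑ i, ∑ j, ∑ k, ∑ a, ∑ b, ∑ c, F i j k a b c
      = ∑ a, ∑ i, ∑ j, ∑ k, ∑ b, ∑ c, F i j k a b c := pull4 _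
    _ = ∑ a, ∑ b, ∑ i, ∑ j, ∑ k, ∑ c, F i j k a b c :=
        Finset.sum_congr rfl fun a _ => pull4 _
    _ = ∑ a, ∑ b, ∑ c, ∑ i, ∑ j, ∑ k, F i j k a b c :=
        Finset.sum_congr rfl fun a _ => Finset.sum_congr rfl fun b _ => pull4 _

variable {g G : Matrix (Fin n) (Fin n) ℝ} {ξ : Fin n → ℝ}

/-- flat form of cub -/
lemma cub_flat (A B : Fin n → Fin n → Fin n → ℝ) :
    cub G A B
      = ∑ i, ∑ j, ∑ k, ∑ a, ∑ b, ∑ c, A i j k * (G i a * G j b * G k c * B a b c) := by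
  unfold cub up3
  simp only [Finset.mul_sum]

lemma cyc_flat (A B : Fin n → Fin n → Fin n → ℝ) :
    cyc G A B
      = ∑ i, ∑ j, ∑ k, ∑ a, ∑ b, ∑ c, A i j k * (G j a * G k b * G i c * B a b c) := by
  unfold cyc up3
  simp only [Finset.mul_sum]

lemma cub_swap (hGsymm : ∀ i j, G i j = G j i) (A B : Fin n → Fin n → Fin n → ℝ) :
    cub G A B = cub G B A := by
  rw [cub_flat, cub_flat, swap33]
  refine Finset.sum_congr rfl fun a _ => Finset.sum_congr rfl fun b _ =>
    Finset.sum_congr rfl fun c _ => Finset.sum_congr rfl fun i _ =>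
    Finset.sum_congr rfl fun j _ => Finset.sum_congr rfl fun k _ => ?_
  rw [hGsymm a i, hGsymm b j, hGsymm c k]; ring

lemma cyc_swap (hGsymm : ∀ i j, G i j = G j i) (A B : Fin n → Fin n → Fin n → ℝ) :
    cyc G A B = ∑ i, ∑ j, ∑ k, B i j k * up3 G A k i j := by
  rw [cyc_flat]
  have : ∀ i j k : Fin n, (B i j k * up3 G A k i j : ℝ)
      = ∑ a, ∑ b, ∑ c, B i j k * (G k a * G i b * G j c * A a b c) := by
    intro i j k; unfold up3; simp only [Finset.mul_sum]
  simp only [this]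
  rw [swap33]
  refine Finset.sum_congr rfl fun a _ => Finset.sum_congr rfl fun b _ =>
    Finset.sum_congr rfl fun c _ => Finset.sum_congr rfl fun i _ =>
    Finset.sum_congr rfl fun j _ => Finset.sum_congr rfl fun k _ => ?_
  rw [hGsymm c i, hGsymm a j, hGsymm b k]; ring

/-- factor out an index-1 function -/
lemma splitS1 (f : Fin n → ℝ) (w : Fin n → Fin n → Fin n → ℝ) :
    ∑ i, ∑ j, ∑ k, f i * w i j k = ∑ i, f i * (∑ j, ∑ k, w i j k) := by
  refine Finset.sum_congr rfl fun i _ => ?_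
  rw [Finset.mul_sum]
  exact Finset.sum_congr rfl fun j _ => (Finset.mul_sum _ _ _).symm

lemma splitS2 (f : Fin n → ℝ) (w : Fin n → Fin n → Fin n → ℝ) :
    ∑ i, ∑ j, ∑ k, f j * w i j k = ∑ j, f j * (∑ i, ∑ k, w i j k) := by
  rw [Finset.sum_comm]
  exact splitS1 f fun j i k => w i j k

lemma splitS3 (f : Fin n → ℝ) (w : Fin n → Fin n → Fin n → ℝ) :
    ∑ i, ∑ j, ∑ k, f k * w i j k = ∑ k, f k * (∑ i, ∑ j, w i j k) := by
  have h : ∀ i : Fin n, ∑ j, ∑ k, f k * w i j k = ∑ k, ∑ j, f k * w i j k :=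
    fun i => Finset.sum_comm
  simp only [h]
  rw [Finset.sum_comm]
  refine Finset.sum_congr rfl fun k _ => ?_
  rw [Finset.mul_sum]
  exact Finset.sum_congr rfl fun i _ => (Finset.mul_sum _ _ _).symm

/-- factor a fully split product -/
lemma split1 (u : Fin n → ℝ) (w : Fin n → Fin n → ℝ) :
    ∑ a, ∑ b, ∑ c, u a * w b c = (∑ a, u a) * (∑ b, ∑ c, w b c) := by
  rw [Finset.sum_mul]
  refine Finset.sum_congr rfl fun a _ => ?_
  rw [Finset.mul_sum]
  exact Finset.sum_congr rfl fun b _ => (Finset.mul_sum _ _ _).symm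

lemma split12 (u : Fin n → ℝ) (w : Fin n → Fin n → ℝ) :
    ∑ a, ∑ b, ∑ c, u b * w a c = (∑ b, u b) * (∑ a, ∑ c, w a c) := by
  rw [Finset.sum_comm]
  exact split1 u fun a c => w a c



lemma con1 (hδ1 : ∀ i j, (∑ k, G i k * g k j) = if i = j then (1:ℝ) else 0) (i k : Fin n) :
    ∑ a, ∑ c, G i a * (G k c * g c a) = G i k := by
  have h : ∀ a : Fin n, ∑ c, G i a * (G k c * g c a) = G i a * (if k = a then (1:ℝ) else 0) := by
    intro a
    rw [← Finset.mul_sum, hδ1 k a]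
  simp only [h, mul_ite, mul_one, mul_zero, Finset.sum_ite_eq, Finset.mem_univ, if_true]

lemma trGg (hδ1 : ∀ i j, (∑ k, G i k * g k j) = if i = j then (1:ℝ) else 0) :
    ∑ a : Fin n, ∑ c, G a c * g c a = (n : ℝ) := by
  have h : ∀ a : Fin n, ∑ c, G a c * g c a = 1 := by
    intro a; rw [hδ1 a a]; simp
  simp [h]

lemma gup (hδ2 : ∀ i j, (∑ k, g i k * G k j) = if i = j then (1:ℝ) else 0) (i : Fin n) :
    ∑ k, g i k * upv G ξ k = ξ i := by
  unfold upv
  simp only [Finset.mul_sum]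
  rw [Finset.sum_comm]
  have h : ∀ a : Fin n, ∑ k, g i k * (G k a * ξ a) = (if i = a then (1:ℝ) else 0) * ξ a := by
    intro a
    rw [← hδ2 i a, Finset.sum_mul]
    exact Finset.sum_congr rfl fun k _ => by ring
  simp only [h, ite_mul, one_mul, zero_mul, Finset.sum_ite_eq, Finset.mem_univ, if_true]

/-- closed form of the raised projective torsion shift -/
lemma hupT (hδ1 : ∀ i j, (∑ k, G i k * g k j) = if i = j then (1:ℝ) else 0)
    (i j k : Fin n) :
    up3 G (Tl g ξ) i j k = (G i k * upv G ξ j - G j k * upv G ξ i) / 2 := by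
  unfold up3 Tl
  have e : ∀ a b c : Fin n, G i a * G j b * G k c * ((g c a * ξ b - g c b * ξ a) / 2)
      = ((G j b * ξ b) * (G i a * (G k c * g c a))
          - (G i a * ξ a) * (G j b * (G k c * g c b))) / 2 := by
    intros; ring
  simp only [e, ← Finset.sum_div, Finset.sum_sub_distrib]
  rw [split12, split1, con1 hδ1, con1 hδ1]
  unfold upv; ring

/-- closed form of the raised non-metricity shift -/
lemma hupR (hδ1 : ∀ i j, (∑ k, G i k * g k j) = if i = j then (1:ℝ) else 0)
    (hgsymm : ∀ i j, g i j = g j i) (i j k : Fin n) :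
    up3 G (Rl g ξ) i j k = 2 * upv G ξ i * G j k := by
  unfold up3 Rl
  have e : ∀ a b c : Fin n, G i a * G j b * G k c * (2 * ξ a * g b c)
      = 2 * ((G i a * ξ a) * (G j b * (G k c * g c b))) := by
    intro a b c; rw [hgsymm b c]; ring
  simp only [e, ← Finset.mul_sum]
  simp only [hδ1 k, mul_ite, mul_one, mul_zero, Finset.sum_ite_eq, Finset.mem_univ, if_true]
  rw [← Finset.sum_mul]
  unfold upv; ring

section Traces
variable {S Q : Fin n → Fin n → Fin n → ℝ}

lemma tS13 (hS : ∀ μ ν α, S μ ν α = - S ν μ α) (j : Fin n) :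
    ∑ i, ∑ k, G i k * S i j k = - v3 G S j := by
  have e : ∀ i k : Fin n, G i k * S i j k = -(G i k * S j i k) := by
    intro i k; rw [hS i j k]; ring
  simp only [e, Finset.sum_neg_distrib]
  rfl

lemma tS12 (hS : ∀ μ ν α, S μ ν α = - S ν μ α) (hGsymm : ∀ i j, G i j = G j i) (k : Fin n) :
    ∑ i, ∑ j, G i j * S i j k = 0 := by
  have key : ∑ i, ∑ j, G i j * S i j k = - ∑ i, ∑ j, G i j * S i j k := by
    have e : ∀ i j : Fin n, G i j * S i j k = -(G i j * S j i k) := by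
      intro i j; rw [hS i j k]; ring
    calc ∑ i, ∑ j, G i j * S i j k = ∑ i, ∑ j, -(G i j * S j i k) := by simp only [e]
      _ = - ∑ i, ∑ j, G i j * S j i k := by simp only [Finset.sum_neg_distrib]
      _ = - ∑ j, ∑ i, G i j * S j i k := by rw [Finset.sum_comm]
      _ = - ∑ j, ∑ i, G j i * S j i k := by
          refine congrArg Neg.neg (Finset.sum_congr rfl fun j _ => Finset.sum_congr rfl fun i _ => ?_)
          rw [hGsymm i j]
  linarith

lemma tQ13 (hQ : ∀ α μ ν, Q α μ ν = Q α ν μ) (j : Fin n) :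
    ∑ i, ∑ k, G i k * Q i j k = q3 G Q j := by
  have e : ∀ i k : Fin n, G i k * Q i j k = G i k * Q i k j := by
    intro i k; rw [hQ i j k]
  simp only [e]
  rfl

end Traces

lemma v3Tl (hδ1 : ∀ i j, (∑ k, G i k * g k j) = if i = j then (1:ℝ) else 0) (μ : Fin n) :
    v3 G (Tl g ξ) μ = (1 - (n:ℝ))/2 * ξ μ := by
  unfold v3 Tl
  have e : ∀ ν α : Fin n, G ν α * ((g α μ * ξ ν - g α ν * ξ μ) / 2)
      = (ξ ν * (G ν α * g α μ) - ξ μ * (G ν α * g α ν)) / 2 := by intros; ring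
  simp only [e, ← Finset.sum_div, Finset.sum_sub_distrib, ← Finset.mul_sum]
  simp only [hδ1, mul_ite, mul_one, mul_zero, Finset.sum_ite_eq', Finset.mem_univ, if_true]
  simp only [Finset.sum_const, Finset.card_univ, Fintype.card_fin, nsmul_eq_mul, mul_one]
  ring

lemma v3Rl (hδ1 : ∀ i j, (∑ k, G i k * g k j) = if i = j then (1:ℝ) else 0)
    (hgsymm : ∀ i j, g i j = g j i) (μ : Fin n) :
    v3 G (Rl g ξ) μ = 2 * (n:ℝ) * ξ μ := by
  unfold v3 Rl
  have e : ∀ ν α : Fin n, G ν α * (2 * ξ μ * g ν α) = 2 * ξ μ * (G ν α * g α ν) := by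
    intro ν α; rw [hgsymm ν α]; ring
  simp only [e, ← Finset.mul_sum]
  simp only [hδ1, Finset.sum_ite_eq', Finset.mem_univ, if_true]
  simp only [Finset.sum_const, Finset.card_univ, Fintype.card_fin, nsmul_eq_mul, mul_one]
  ring

lemma q3Rl (hδ1 : ∀ i j, (∑ k, G i k * g k j) = if i = j then (1:ℝ) else 0) (ν : Fin n) :
    q3 G (Rl g ξ) ν = 2 * ξ ν := by
  unfold q3 Rl
  have e : ∀ α μ : Fin n, G α μ * (2 * ξ α * g μ ν) = 2 * (ξ α * (G α μ * g μ ν)) := by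
    intros; ring
  simp only [e, ← Finset.mul_sum]
  simp [hδ1, mul_ite, Finset.sum_ite_eq']

lemma split1c (u w : Fin n → Fin n → ℝ) :
    ∑ i, ∑ j, ∑ k, u j i * w k i = ∑ i, (∑ j, u j i) * (∑ k, w k i) := by
  refine Finset.sum_congr rfl fun i _ => ?_
  rw [Finset.sum_mul]
  exact Finset.sum_congr rfl fun j _ => by rw [Finset.mul_sum]

lemma split2c (u w : Fin n → Fin n → ℝ) :
    ∑ i, ∑ j, ∑ k, u i j * w k j = ∑ j, (∑ i, u i j) * (∑ k, w k j) := by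
  rw [Finset.sum_comm]
  exact split1c u w

lemma split23 (u v : Fin n → Fin n → ℝ) :
    ∑ i, ∑ j, ∑ k, u i k * v j k = ∑ k, (∑ i, u i k) * (∑ j, v j k) := by
  have h1 : ∀ i : Fin n, ∑ j, ∑ k, u i k * v j k = ∑ k, ∑ j, u i k * v j k :=
    fun i => Finset.sum_comm
  simp only [h1]
  rw [Finset.sum_comm]
  refine Finset.sum_congr rfl fun k _ => ?_
  rw [Finset.sum_mul]
  exact Finset.sum_congr rfl fun i _ => by rw [Finset.mul_sum]

lemma xiG (hGsymm : ∀ i j, G i j = G j i) (k : Fin n) :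
    ∑ j, ξ j * G j k = upv G ξ k := by
  unfold upv
  exact Finset.sum_congr rfl fun j _ => by rw [hGsymm j k]; ring

section Scalars
variable {S Q : Fin n → Fin n → Fin n → ℝ}
variable (hδ1 : ∀ i j, (∑ k, G i k * g k j) = if i = j then (1:ℝ) else 0)
variable (hδ2 : ∀ i j, (∑ k, g i k * G k j) = if i = j then (1:ℝ) else 0)
set_option linter.unusedSectionVars false
variable (hgsymm : ∀ i j, g i j = g j i) (hGsymm : ∀ i j, G i j = G j i)

include hδ1 hδ2 hgsymm hGsymm

lemma cubST (hS : ∀ μ ν α, S μ ν α = - S ν μ α) :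
    cub G S (Tl g ξ) = - vdot G (v3 G S) ξ := by
  unfold cub
  simp only [hupT hδ1]
  have e : ∀ i j k : Fin n, S i j k * ((G i k * upv G ξ j - G j k * upv G ξ i) / 2)
      = (upv G ξ j * (G i k * S i j k) - upv G ξ i * (G j k * S i j k)) / 2 := by
    intros; ring
  simp only [e, ← Finset.sum_div, Finset.sum_sub_distrib]
  rw [splitS2, splitS1]
  simp only [tS13 hS]
  have e2 : ∀ j : Fin n, upv G ξ j * (-(v3 G S j)) = -(v3 G S j * upv G ξ j) := by
    intros; ring
  have e3 : ∀ i : Fin n, upv G ξ i * (∑ j, ∑ k, G j k * S i j k) = v3 G S i * upv G ξ i := by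
    intro i
    rw [show (∑ j, ∑ k, G j k * S i j k) = v3 G S i from rfl]; ring
  simp only [e2, e3, Finset.sum_neg_distrib]
  unfold vdot; ring

lemma cubTT :
    cub G (Tl g ξ) (Tl g ξ) = ((n:ℝ) - 1) / 2 * vdot G ξ ξ := by
  unfold cub
  simp only [hupT hδ1]
  have e : ∀ i j k : Fin n, Tl g ξ i j k * ((G i k * upv G ξ j - G j k * upv G ξ i) / 2)
      = ((ξ j * upv G ξ j) * (G i k * g k i)
          - (g k i * upv G ξ i) * (ξ j * G j k)
          - (ξ i * G i k) * (g k j * upv G ξ j)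
          + (ξ i * upv G ξ i) * (G j k * g k j)) / 4 := by
    intro i j k; unfold Tl; ring
  simp only [e, ← Finset.sum_div, Finset.sum_sub_distrib, Finset.sum_add_distrib]
  rw [splitS2, splitS1, split23, split23]
  have t1 : (∑ i : Fin n, ∑ k, G i k * g k i) = (n:ℝ) := trGg hδ1
  have t2 : ∀ k : Fin n, (∑ i, g k i * upv G ξ i) = ξ k := by
    intro k; exact gup hδ2 k
  have t3 : ∀ k : Fin n, (∑ j, ξ j * G j k) = upv G ξ k := xiG hGsymm
  have t4 : ∀ k : Fin n, (∑ i, ξ i * G i k) = upv G ξ k := xiG hGsymm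
  have t5 : ∀ k : Fin n, (∑ j, g k j * upv G ξ j) = ξ k := fun k => gup hδ2 k
  have t6 : (∑ j : Fin n, ∑ k, G j k * g k j) = (n:ℝ) := trGg hδ1
  simp only [t1, t2, t3, t4, t5, t6]
  have e2 : ∀ k : Fin n, ξ k * upv G ξ k = ξ k * upv G ξ k := fun _ => rfl
  have c1 : ∀ k : Fin n, upv G ξ k * ξ k = ξ k * upv G ξ k := fun k => mul_comm _ _
  simp only [c1]
  simp only [← Finset.sum_mul]
  unfold vdot; ring

lemma cycST (hS : ∀ μ ν α, S μ ν α = - S ν μ α) :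
    cyc G S (Tl g ξ) = vdot G (v3 G S) ξ / 2 := by
  unfold cyc
  simp only [hupT hδ1]
  have e : ∀ i j k : Fin n, S i j k * ((G j i * upv G ξ k - G k i * upv G ξ j) / 2)
      = (upv G ξ k * (G i j * S i j k) - upv G ξ j * (G i k * S i j k)) / 2 := by
    intro i j k; rw [hGsymm j i, hGsymm k i]; ring
  simp only [e, ← Finset.sum_div, Finset.sum_sub_distrib]
  rw [splitS3, splitS2]
  simp only [tS12 hS hGsymm, tS13 hS, mul_zero, Finset.sum_const_zero]
  have e2 : ∀ j : Fin n, upv G ξ j * (-(v3 G S j)) = -(v3 G S j * upv G ξ j) := by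
    intros; ring
  simp only [e2, Finset.sum_neg_distrib]
  unfold vdot; ring

lemma cycTS (hS : ∀ μ ν α, S μ ν α = - S ν μ α) :
    cyc G (Tl g ξ) S = vdot G (v3 G S) ξ / 2 := by
  rw [cyc_swap hGsymm]
  simp only [hupT hδ1]
  have e : ∀ i j k : Fin n, S i j k * ((G k j * upv G ξ i - G i j * upv G ξ k) / 2)
      = (upv G ξ i * (G j k * S i j k) - upv G ξ k * (G i j * S i j k)) / 2 := by
    intro i j k; rw [hGsymm k j, hGsymm i j]; ring
  simp only [e, ← Finset.sum_div, Finset.sum_sub_distrib]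
  rw [splitS1, splitS3]
  simp only [tS12 hS hGsymm, mul_zero, Finset.sum_const_zero]
  have e3 : ∀ i : Fin n, upv G ξ i * (∑ j, ∑ k, G j k * S i j k) = v3 G S i * upv G ξ i := by
    intro i
    rw [show (∑ j, ∑ k, G j k * S i j k) = v3 G S i from rfl]; ring
  simp only [e3]
  unfold vdot; ring

lemma cycTT :
    cyc G (Tl g ξ) (Tl g ξ) = (1 - (n:ℝ)) / 4 * vdot G ξ ξ := by
  unfold cyc
  simp only [hupT hδ1]
  have e : ∀ i j k : Fin n, Tl g ξ i j k * ((G j i * upv G ξ k - G k i * upv G ξ j) / 2)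
      = ((ξ j * G j i) * (g i k * upv G ξ k)
          - (ξ j * upv G ξ j) * (G i k * g k i)
          - (ξ i * G i j) * (g j k * upv G ξ k)
          + (ξ i * G i k) * (g k j * upv G ξ j)) / 4 := by
    intro i j k; unfold Tl
    rw [hGsymm j i, hGsymm k i]
    rw [show g k i = g i k from hgsymm k i, show g k j = g j k from hgsymm k j]
    ring
  simp only [e, ← Finset.sum_div, Finset.sum_sub_distrib, Finset.sum_add_distrib]
  rw [split1c, splitS2, split2c, split23]
  have t1 : (∑ i : Fin n, ∑ k, G i k * g k i) = (n:ℝ) := trGg hδ1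
  have t2 : ∀ i : Fin n, (∑ k, g i k * upv G ξ k) = ξ i := fun i => gup hδ2 i
  have t3 : ∀ k : Fin n, (∑ j, ξ j * G j k) = upv G ξ k := xiG hGsymm
  have t4 : ∀ k : Fin n, (∑ i, ξ i * G i k) = upv G ξ k := xiG hGsymm
  have t5 : ∀ k : Fin n, (∑ j, g k j * upv G ξ j) = ξ k := fun k => gup hδ2 k
  simp only [t1, t2, t3, t4, t5]
  have c1 : ∀ k : Fin n, upv G ξ k * ξ k = ξ k * upv G ξ k := fun k => mul_comm _ _
  simp only [c1]
  rw [← Finset.sum_mul]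
  unfold vdot; ring

lemma cubQR (hQ : ∀ α μ ν, Q α μ ν = Q α ν μ) :
    cub G Q (Rl g ξ) = 2 * vdot G (v3 G Q) ξ := by
  unfold cub
  simp only [hupR hδ1 hgsymm]
  have e : ∀ i j k : Fin n, Q i j k * (2 * upv G ξ i * G j k)
      = (2 * upv G ξ i) * (G j k * Q i j k) := by intros; ring
  simp only [e]
  rw [splitS1]
  have e2 : ∀ i : Fin n, (2 * upv G ξ i) * (∑ j, ∑ k, G j k * Q i j k)
      = 2 * (v3 G Q i * upv G ξ i) := by
    intro i
    rw [show (∑ j, ∑ k, G j k * Q i j k) = v3 G Q i from rfl]; ring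
  simp only [e2, ← Finset.mul_sum]
  unfold vdot
  rfl

lemma cubSR (hS : ∀ μ ν α, S μ ν α = - S ν μ α) :
    cub G S (Rl g ξ) = 2 * vdot G (v3 G S) ξ := by
  unfold cub
  simp only [hupR hδ1 hgsymm]
  have e : ∀ i j k : Fin n, S i j k * (2 * upv G ξ i * G j k)
      = (2 * upv G ξ i) * (G j k * S i j k) := by intros; ring
  simp only [e]
  rw [splitS1]
  have e2 : ∀ i : Fin n, (2 * upv G ξ i) * (∑ j, ∑ k, G j k * S i j k)
      = 2 * (v3 G S i * upv G ξ i) := by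
    intro i
    rw [show (∑ j, ∑ k, G j k * S i j k) = v3 G S i from rfl]; ring
  simp only [e2, ← Finset.mul_sum]
  unfold vdot
  rfl

lemma cubRR : cub G (Rl g ξ) (Rl g ξ) = 4 * (n:ℝ) * vdot G ξ ξ := by
  unfold cub
  simp only [hupR hδ1 hgsymm]
  have e : ∀ i j k : Fin n, Rl g ξ i j k * (2 * upv G ξ i * G j k)
      = (4 * (ξ i * upv G ξ i)) * (G j k * g k j) := by
    intro i j k; unfold Rl; rw [hgsymm j k]; ring
  simp only [e]
  rw [splitS1]
  have t6 : (∑ j : Fin n, ∑ k, G j k * g k j) = (n:ℝ) := trGg hδ1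
  simp only [t6]
  have e2 : ∀ i : Fin n, (4 * (ξ i * upv G ξ i)) * (n:ℝ)
      = (4 * (n:ℝ)) * (ξ i * upv G ξ i) := by intros; ring
  simp only [e2, ← Finset.mul_sum]
  unfold vdot; ring

lemma cycQR (hQ : ∀ α μ ν, Q α μ ν = Q α ν μ) :
    cyc G Q (Rl g ξ) = 2 * vdot G (q3 G Q) ξ := by
  unfold cyc
  simp only [hupR hδ1 hgsymm]
  have e : ∀ i j k : Fin n, Q i j k * (2 * upv G ξ j * G k i)
      = (2 * upv G ξ j) * (G i k * Q i j k) := by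
    intro i j k; rw [hGsymm k i]; ring
  simp only [e]
  rw [splitS2]
  simp only [tQ13 hQ]
  have e2 : ∀ j : Fin n, (2 * upv G ξ j) * (q3 G Q j) = 2 * (q3 G Q j * upv G ξ j) := by
    intros; ring
  simp only [e2, ← Finset.mul_sum]
  unfold vdot
  rfl

lemma cycRQ (hQ : ∀ α μ ν, Q α μ ν = Q α ν μ) :
    cyc G (Rl g ξ) Q = 2 * vdot G (q3 G Q) ξ := by
  rw [cyc_swap hGsymm]
  simp only [hupR hδ1 hgsymm]
  have e : ∀ i j k : Fin n, Q i j k * (2 * upv G ξ k * G i j)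
      = (2 * upv G ξ k) * (G i j * Q i j k) := by intros; ring
  simp only [e]
  rw [splitS3]
  have e2 : ∀ k : Fin n, (2 * upv G ξ k) * (∑ i, ∑ j, G i j * Q i j k)
      = 2 * (q3 G Q k * upv G ξ k) := by
    intro k
    rw [show (∑ i, ∑ j, G i j * Q i j k) = q3 G Q k from rfl]; ring
  simp only [e2, ← Finset.mul_sum]
  unfold vdot
  rfl

lemma cycRR : cyc G (Rl g ξ) (Rl g ξ) = 4 * vdot G ξ ξ := by
  unfold cyc
  simp only [hupR hδ1 hgsymm]
  have e : ∀ i j k : Fin n, Rl g ξ i j k * (2 * upv G ξ j * G k i)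
      = (ξ i * G i k) * (4 * (g k j * upv G ξ j)) := by
    intro i j k; unfold Rl; rw [hGsymm k i, hgsymm j k]; ring
  simp only [e]
  rw [split23]
  have t3 : ∀ k : Fin n, (∑ i, ξ i * G i k) = upv G ξ k := xiG hGsymm
  have t5 : ∀ k : Fin n, (∑ j, 4 * (g k j * upv G ξ j)) = 4 * ξ k := by
    intro k
    rw [← Finset.mul_sum, gup hδ2 k]
  simp only [t3, t5]
  have e2 : ∀ k : Fin n, upv G ξ k * (4 * ξ k) = 4 * (ξ k * upv G ξ k) := by intros; ring
  simp only [e2, ← Finset.mul_sum]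
  unfold vdot
  rfl

lemma cubQT (hQ : ∀ α μ ν, Q α μ ν = Q α ν μ) :
    cub G Q (Tl g ξ) = (vdot G (q3 G Q) ξ - vdot G (v3 G Q) ξ) / 2 := by
  unfold cub
  simp only [hupT hδ1]
  have e : ∀ i j k : Fin n, Q i j k * ((G i k * upv G ξ j - G j k * upv G ξ i) / 2)
      = (upv G ξ j * (G i k * Q i j k) - upv G ξ i * (G j k * Q i j k)) / 2 := by
    intros; ring
  simp only [e, ← Finset.sum_div, Finset.sum_sub_distrib]
  rw [splitS2, splitS1]
  simp only [tQ13 hQ]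
  have e2 : ∀ j : Fin n, upv G ξ j * (q3 G Q j) = q3 G Q j * upv G ξ j := by
    intros; ring
  have e3 : ∀ i : Fin n, upv G ξ i * (∑ j, ∑ k, G j k * Q i j k) = v3 G Q i * upv G ξ i := by
    intro i
    rw [show (∑ j, ∑ k, G j k * Q i j k) = v3 G Q i from rfl]; ring
  simp only [e2, e3]
  unfold vdot
  rfl

lemma cubRT : cub G (Rl g ξ) (Tl g ξ) = (1 - (n:ℝ)) * vdot G ξ ξ := by
  unfold cub
  simp only [hupT hδ1]
  have e : ∀ i j k : Fin n, Rl g ξ i j k * ((G i k * upv G ξ j - G j k * upv G ξ i) / 2)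
      = (ξ i * G i k) * (g k j * upv G ξ j) - (ξ i * upv G ξ i) * (G j k * g k j) := by
    intro i j k; unfold Rl; rw [show g j k = g k j from hgsymm j k]; ring
  simp only [e, Finset.sum_sub_distrib]
  rw [split23, splitS1]
  have t4 : ∀ k : Fin n, (∑ i, ξ i * G i k) = upv G ξ k := xiG hGsymm
  have t5 : ∀ k : Fin n, (∑ j, g k j * upv G ξ j) = ξ k := fun k => gup hδ2 k
  have t6 : (∑ j : Fin n, ∑ k, G j k * g k j) = (n:ℝ) := trGg hδ1
  simp only [t4, t5, t6]
  have c1 : ∀ k : Fin n, upv G ξ k * ξ k = ξ k * upv G ξ k := fun k => mul_comm _ _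
  have c2 : ∀ i : Fin n, (ξ i * upv G ξ i) * (n:ℝ) = (n:ℝ) * (ξ i * upv G ξ i) := by
    intros; ring
  simp only [c1, c2, ← Finset.mul_sum]
  unfold vdot; ring

end Scalars

section Expand
variable {A B : Fin n → Fin n → Fin n → ℝ}

lemma up3_add (A B : Fin n → Fin n → Fin n → ℝ) (i j k : Fin n) :
    up3 G (fun a b c => A a b c + B a b c) i j k = up3 G A i j k + up3 G B i j k := by
  unfold up3
  simp only [mul_add, Finset.sum_add_distrib]

lemma cub_expand (A B : Fin n → Fin n → Fin n → ℝ) :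
    cub G (fun i j k => A i j k + B i j k) (fun i j k => A i j k + B i j k)
      = cub G A A + cub G A B + cub G B A + cub G B B := by
  unfold cub
  simp only [up3_add A B]
  have e : ∀ i j k : Fin n,
      (A i j k + B i j k) * (up3 G A i j k + up3 G B i j k)
        = A i j k * up3 G A i j k + A i j k * up3 G B i j k
            + B i j k * up3 G A i j k + B i j k * up3 G B i j k := by intros; ring
  simp only [e, Finset.sum_add_distrib]

lemma cyc_expand (A B : Fin n → Fin n → Fin n → ℝ) :
    cyc G (fun i j k => A i j k + B i j k) (fun i j k => A i j k + B i j k)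
      = cyc G A A + cyc G A B + cyc G B A + cyc G B B := by
  unfold cyc
  simp only [up3_add A B]
  have e : ∀ i j k : Fin n,
      (A i j k + B i j k) * (up3 G A j k i + up3 G B j k i)
        = A i j k * up3 G A j k i + A i j k * up3 G B j k i
            + B i j k * up3 G A j k i + B i j k * up3 G B j k i := by intros; ring
  simp only [e, Finset.sum_add_distrib]

lemma v3_add (A B : Fin n → Fin n → Fin n → ℝ) (μ : Fin n) :
    v3 G (fun i j k => A i j k + B i j k) μ = v3 G A μ + v3 G B μ := by
  unfold v3
  simp only [mul_add, Finset.sum_add_distrib]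

lemma q3_add (A B : Fin n → Fin n → Fin n → ℝ) (ν : Fin n) :
    q3 G (fun i j k => A i j k + B i j k) ν = q3 G A ν + q3 G B ν := by
  unfold q3
  simp only [mul_add, Finset.sum_add_distrib]

lemma upv_shift (w : Fin n → ℝ) (d : ℝ) :
    upv G (fun a => w a + d * ξ a) = fun μ => upv G w μ + d * upv G ξ μ := by
  funext μ
  unfold upv
  simp only [mul_add, Finset.sum_add_distrib]
  congr 1
  rw [Finset.mul_sum]
  exact Finset.sum_congr rfl fun a _ => by ring

lemma vdot_symm (hGsymm : ∀ i j, G i j = G j i) (v w : Fin n → ℝ) :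
    vdot G v w = vdot G w v := by
  unfold vdot upv
  simp only [Finset.mul_sum]
  rw [Finset.sum_comm]
  refine Finset.sum_congr rfl fun a _ => Finset.sum_congr rfl fun μ _ => ?_
  rw [hGsymm a μ]; ring

lemma vdot_shift (v w : Fin n → ℝ) (c d : ℝ) :
    vdot G (fun μ => v μ + c * ξ μ) (fun μ => w μ + d * ξ μ)
      = vdot G v w + d * vdot G v ξ + c * vdot G ξ w + c * d * vdot G ξ ξ := by
  unfold vdot
  rw [upv_shift w d]
  have e : ∀ μ : Fin n,
      (v μ + c * ξ μ) * (upv G w μ + d * upv G ξ μ)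
        = v μ * upv G w μ + d * (v μ * upv G ξ μ)
            + c * (ξ μ * upv G w μ) + c * d * (ξ μ * upv G ξ μ) := by intros; ring
  simp only [e, Finset.sum_add_distrib, ← Finset.mul_sum]

end Expand
end Stmt12Aux

namespace Stmt12Aux

lemma cub_expand2 {n : ℕ} {G : Matrix (Fin n) (Fin n) ℝ}
    (A B C D : Fin n → Fin n → Fin n → ℝ) :
    cub G (fun i j k => A i j k + B i j k) (fun i j k => C i j k + D i j k)
      = cub G A C + cub G A D + cub G B C + cub G B D := by
  unfold cub
  simp only [up3_add C D]
  have e : ∀ i j k : Fin n,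
      (A i j k + B i j k) * (up3 G C i j k + up3 G D i j k)
        = A i j k * up3 G C i j k + A i j k * up3 G D i j k
            + B i j k * up3 G C i j k + B i j k * up3 G D i j k := by intros; ring
  simp only [e, Finset.sum_add_distrib]

lemma quadL_eq (n : ℕ) (b₁ b₂ b₃ a₁ a₂ a₃ a₄ a₅ c₁ c₂ c₃ : ℝ)
    (G : Matrix (Fin n) (Fin n) ℝ) (S Q : Fin n → Fin n → Fin n → ℝ) :
    quadL n b₁ b₂ b₃ a₁ a₂ a₃ a₄ a₅ c₁ c₂ c₃ G S Q
      = b₁ * cub G S S + b₂ * cyc G S S + b₃ * vdot G (v3 G S) (v3 G S)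
        + a₁ * cub G Q Q + a₂ * cyc G Q Q + a₃ * vdot G (v3 G Q) (v3 G Q)
        + a₄ * vdot G (q3 G Q) (q3 G Q) + a₅ * vdot G (v3 G Q) (q3 G Q)
        + c₁ * cub G Q S + c₂ * vdot G (v3 G Q) (v3 G S)
        + c₃ * vdot G (q3 G Q) (v3 G S) := rfl

end Stmt12Aux


open Stmt12Aux in
/-- Projective invariance of the general quadratic action: under the constraints
(29)–(31) of the paper, L is invariant under the shift of torsion and
non-metricity induced by Γ^λ_{μν} → Γ^λ_{μν} + δ^λ_μ ξ_ν. -/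
theorem stmt_12 (n : ℕ) (hn : 1 ≤ n)
    (b₁ b₂ b₃ a₁ a₂ a₃ a₄ a₅ c₁ c₂ c₃ : ℝ)
    (h1 : 4 * (2 * a₁ + 2 * (n : ℝ) * a₃ + a₅) - c₁ + (1 - (n : ℝ)) * c₂ = 0)
    (h2 : 4 * (2 * a₂ + 2 * a₄ + (n : ℝ) * a₅) + c₁ + (1 - (n : ℝ)) * c₃ = 0)
    (h3 : -2 * b₁ + b₂ + (1 - (n : ℝ)) * b₃ + 2 * (c₁ + (n : ℝ) * c₂ + c₃) = 0)
    (g G : Matrix (Fin n) (Fin n) ℝ)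
    (hgsymm : ∀ i j, g i j = g j i) (hGsymm : ∀ i j, G i j = G j i)
    (hgG : g * G = 1) (hGg : G * g = 1)
    (S Q : Fin n → Fin n → Fin n → ℝ)
    (hS : ∀ μ ν α, S μ ν α = - S ν μ α)
    (hQ : ∀ α μ ν, Q α μ ν = Q α ν μ)
    (ξ : Fin n → ℝ) :
    quadL n b₁ b₂ b₃ a₁ a₂ a₃ a₄ a₅ c₁ c₂ c₃ G
        (fun μ ν α => S μ ν α + (g α μ * ξ ν - g α ν * ξ μ) / 2)
        (fun α μ ν => Q α μ ν + 2 * ξ α * g μ ν)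
      = quadL n b₁ b₂ b₃ a₁ a₂ a₃ a₄ a₅ c₁ c₂ c₃ G S Q := by
  classical
  have hδ1 : ∀ i j, (∑ k, G i k * g k j) = if i = j then (1:ℝ) else 0 := by
    intro i j
    have h := congrArg (fun M => M i j) hGg
    simpa [Matrix.mul_apply, Matrix.one_apply] using h
  have hδ2 : ∀ i j, (∑ k, g i k * G k j) = if i = j then (1:ℝ) else 0 := by
    intro i j
    have h := congrArg (fun M => M i j) hgG
    simpa [Matrix.mul_apply, Matrix.one_apply] using h
  have hTS : (fun μ ν α => S μ ν α + (g α μ * ξ ν - g α ν * ξ μ) / 2)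
      = (fun i j k => S i j k + Tl g ξ i j k) := rfl
  have hRQ : (fun α μ ν => Q α μ ν + 2 * ξ α * g μ ν)
      = (fun i j k => Q i j k + Rl g ξ i j k) := rfl
  rw [hTS, hRQ, quadL_eq, quadL_eq]
  have hv3S : v3 G (fun i j k => S i j k + Tl g ξ i j k)
      = fun μ => v3 G S μ + (1 - (n:ℝ)) / 2 * ξ μ := by
    funext μ; rw [v3_add, v3Tl hδ1]
  have hv3Q : v3 G (fun i j k => Q i j k + Rl g ξ i j k)
      = fun μ => v3 G Q μ + 2 * (n:ℝ) * ξ μ := by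
    funext μ; rw [v3_add, v3Rl hδ1 hgsymm]
  have hq3Q : q3 G (fun i j k => Q i j k + Rl g ξ i j k)
      = fun ν => q3 G Q ν + 2 * ξ ν := by
    funext ν; rw [q3_add, q3Rl hδ1]
  rw [hv3S, hv3Q, hq3Q]
  have E1 : cub G (fun i j k => S i j k + Tl g ξ i j k) (fun i j k => S i j k + Tl g ξ i j k)
      = cub G S S + (-2 * vdot G (v3 G S) ξ + ((n:ℝ) - 1) / 2 * vdot G ξ ξ) := by
    rw [cub_expand S (Tl g ξ), cub_swap hGsymm (Tl g ξ) S,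
        cubST hδ1 hδ2 hgsymm hGsymm hS, cubTT hδ1 hδ2 hgsymm hGsymm]
    ring
  have E2 : cyc G (fun i j k => S i j k + Tl g ξ i j k) (fun i j k => S i j k + Tl g ξ i j k)
      = cyc G S S + (vdot G (v3 G S) ξ + (1 - (n:ℝ)) / 4 * vdot G ξ ξ) := by
    rw [cyc_expand S (Tl g ξ), cycST hδ1 hδ2 hgsymm hGsymm hS,
        cycTS hδ1 hδ2 hgsymm hGsymm hS, cycTT hδ1 hδ2 hgsymm hGsymm]
    ring
  have E3 : vdot G (fun μ => v3 G S μ + (1 - (n:ℝ)) / 2 * ξ μ)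
        (fun μ => v3 G S μ + (1 - (n:ℝ)) / 2 * ξ μ)
      = vdot G (v3 G S) (v3 G S)
        + ((1 - (n:ℝ)) * vdot G (v3 G S) ξ + (1 - (n:ℝ))^2 / 4 * vdot G ξ ξ) := by
    rw [vdot_shift (v3 G S) (v3 G S) ((1 - (n:ℝ)) / 2) ((1 - (n:ℝ)) / 2),
        vdot_symm hGsymm ξ (v3 G S)]
    ring
  have E4 : cub G (fun i j k => Q i j k + Rl g ξ i j k) (fun i j k => Q i j k + Rl g ξ i j k)
      = cub G Q Q + (4 * vdot G (v3 G Q) ξ + 4 * (n:ℝ) * vdot G ξ ξ) := by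
    rw [cub_expand Q (Rl g ξ), cub_swap hGsymm (Rl g ξ) Q,
        cubQR hδ1 hδ2 hgsymm hGsymm hQ, cubRR hδ1 hδ2 hgsymm hGsymm]
    ring
  have E5 : cyc G (fun i j k => Q i j k + Rl g ξ i j k) (fun i j k => Q i j k + Rl g ξ i j k)
      = cyc G Q Q + (4 * vdot G (q3 G Q) ξ + 4 * vdot G ξ ξ) := by
    rw [cyc_expand Q (Rl g ξ), cycQR hδ1 hδ2 hgsymm hGsymm hQ,
        cycRQ hδ1 hδ2 hgsymm hGsymm hQ, cycRR hδ1 hδ2 hgsymm hGsymm]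
    ring
  have E6 : vdot G (fun μ => v3 G Q μ + 2 * (n:ℝ) * ξ μ)
        (fun μ => v3 G Q μ + 2 * (n:ℝ) * ξ μ)
      = vdot G (v3 G Q) (v3 G Q)
        + (4 * (n:ℝ) * vdot G (v3 G Q) ξ + 4 * (n:ℝ)^2 * vdot G ξ ξ) := by
    rw [vdot_shift (v3 G Q) (v3 G Q) (2 * (n:ℝ)) (2 * (n:ℝ)),
        vdot_symm hGsymm ξ (v3 G Q)]
    ring
  have E7 : vdot G (fun ν => q3 G Q ν + 2 * ξ ν) (fun ν => q3 G Q ν + 2 * ξ ν)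
      = vdot G (q3 G Q) (q3 G Q)
        + (4 * vdot G (q3 G Q) ξ + 4 * vdot G ξ ξ) := by
    have h2' : (fun ν => q3 G Q ν + 2 * ξ ν) = (fun ν => q3 G Q ν + (2:ℝ) * ξ ν) := rfl
    rw [vdot_shift (q3 G Q) (q3 G Q) (2:ℝ) (2:ℝ), vdot_symm hGsymm ξ (q3 G Q)]
    ring
  have E8 : vdot G (fun μ => v3 G Q μ + 2 * (n:ℝ) * ξ μ) (fun ν => q3 G Q ν + 2 * ξ ν)
      = vdot G (v3 G Q) (q3 G Q)
        + (2 * vdot G (v3 G Q) ξ + 2 * (n:ℝ) * vdot G (q3 G Q) ξ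
            + 4 * (n:ℝ) * vdot G ξ ξ) := by
    rw [vdot_shift (v3 G Q) (q3 G Q) (2 * (n:ℝ)) (2:ℝ), vdot_symm hGsymm ξ (q3 G Q)]
    ring
  have E9 : cub G (fun i j k => Q i j k + Rl g ξ i j k) (fun i j k => S i j k + Tl g ξ i j k)
      = cub G Q S + ((vdot G (q3 G Q) ξ - vdot G (v3 G Q) ξ) / 2
          + 2 * vdot G (v3 G S) ξ + (1 - (n:ℝ)) * vdot G ξ ξ) := by
    rw [cub_expand2 Q (Rl g ξ) S (Tl g ξ), cubQT hδ1 hδ2 hgsymm hGsymm hQ,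
        cub_swap hGsymm (Rl g ξ) S, cubSR hδ1 hδ2 hgsymm hGsymm hS,
        cubRT hδ1 hδ2 hgsymm hGsymm]
    ring
  have E10 : vdot G (fun μ => v3 G Q μ + 2 * (n:ℝ) * ξ μ)
        (fun μ => v3 G S μ + (1 - (n:ℝ)) / 2 * ξ μ)
      = vdot G (v3 G Q) (v3 G S)
        + ((1 - (n:ℝ)) / 2 * vdot G (v3 G Q) ξ + 2 * (n:ℝ) * vdot G (v3 G S) ξ
            + (n:ℝ) * (1 - (n:ℝ)) * vdot G ξ ξ) := by
    rw [vdot_shift (v3 G Q) (v3 G S) (2 * (n:ℝ)) ((1 - (n:ℝ)) / 2),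
        vdot_symm hGsymm ξ (v3 G S)]
    ring
  have E11 : vdot G (fun ν => q3 G Q ν + 2 * ξ ν)
        (fun μ => v3 G S μ + (1 - (n:ℝ)) / 2 * ξ μ)
      = vdot G (q3 G Q) (v3 G S)
        + ((1 - (n:ℝ)) / 2 * vdot G (q3 G Q) ξ + 2 * vdot G (v3 G S) ξ
            + (1 - (n:ℝ)) * vdot G ξ ξ) := by
    rw [vdot_shift (q3 G Q) (v3 G S) (2:ℝ) ((1 - (n:ℝ)) / 2),
        vdot_symm hGsymm ξ (v3 G S)]
    ring
  rw [E1, E2, E3, E4, E5, E6, E7, E8, E9, E10, E11]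
  linear_combination (vdot G (v3 G Q) ξ / 2 + (n:ℝ) * vdot G ξ ξ / 2) * h1
    + (vdot G (q3 G Q) ξ / 2 + vdot G ξ ξ / 2) * h2
    + (vdot G (v3 G S) ξ + (1 - (n:ℝ)) * vdot G ξ ξ / 4) * h3
end

section
/- Let n ≥ 1 and let b₁, b₂, b₃, a₁, a₂, a₃, a₄, a₅, c₁, c₂, c₃ : ℝ satisfy the third-kind invariance constraints: 2a₂ + 4a₃ + (n + 1)a₅ = 0, 2a₁ + a₂ + a₅ + (n + 1)a₄ = 0, and −c₁ + 2c₂ + (n + 1)c₃ = 0 (note no constraint is placed on b₁, b₂, b₃). Let g : Matrix (Fin n) (Fin n) ℝ be symmetric with symmetric inverse G (g * G = 1, G * g = 1), let S : Fin n → Fin n → Fin n → ℝ satisfy S μ ν α = −S ν μ α, let Q : Fin n → Fin n → Fin n → ℝ satisfy Q α μ ν = Q α ν μ, and let χ : Fin n → ℝ. Define the shifted non-metricity Q' α μ ν := Q α μ ν + χ μ * g ν α + χ ν * g μ α (the torsion is unchanged). Then L(g, S, Q') = L(g, S, Q), where L is the general quadratic Lagrangian defined in the context. -/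
namespace Stmt14Aux

theorem sum4_rot {ι M : Type*} [Fintype ι] [AddCommMonoid M] (f : ι → ι → ι → ι → M) :
    (∑ x, ∑ a, ∑ b, ∑ c, f x a b c) = ∑ a, ∑ b, ∑ c, ∑ x, f x a b c := by
  rw [Finset.sum_comm]
  exact Finset.sum_congr rfl fun a _ => by
    rw [Finset.sum_comm]
    exact Finset.sum_congr rfl fun b _ => Finset.sum_comm

theorem sum3_rot {ι M : Type*} [Fintype ι] [AddCommMonoid M] (f : ι → ι → ι → M) :
    (∑ x, ∑ b, ∑ c, f x b c) = ∑ b, ∑ c, ∑ x, f x b c := by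
  rw [Finset.sum_comm]
  exact Finset.sum_congr rfl fun b _ => Finset.sum_comm

/-- collapse a δ-pair: `∑ a (∑ j A x j B j a) X a = X x`. -/
theorem collapse {n : ℕ} {A B : Matrix (Fin n) (Fin n) ℝ}
    (hδ : ∀ x y, ∑ j, A x j * B j y = if x = y then 1 else 0)
    (x : Fin n) (X : Fin n → ℝ) :
    ∑ a, ∑ j, A x j * B j a * X a = X x := by
  simp only [← Finset.sum_mul, hδ, ite_mul, one_mul, zero_mul]
  simp

variable {n : ℕ} {g G : Matrix (Fin n) (Fin n) ℝ}

theorem K1 (hδ1 : ∀ x y, ∑ j, g x j * G j y = if x = y then 1 else 0)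
    (T : Fin n → Fin n → Fin n → ℝ) (μ : Fin n) :
    (∑ ν, ∑ α, g ν α * (∑ a, ∑ b, ∑ c, G α a * G μ b * G ν c * T a b c))
      = ∑ b, G μ b * (∑ a, ∑ c, G a c * T a b c) := by
  have step : ∀ ν, (∑ α, g ν α * (∑ a, ∑ b, ∑ c, G α a * G μ b * G ν c * T a b c))
      = ∑ b, ∑ c, G μ b * (G ν c * T ν b c) := by
    intro ν
    simp only [Finset.mul_sum]
    rw [sum4_rot, sum3_rot]
    calc (∑ b, ∑ c, ∑ a, ∑ α, g ν α * (G α a * G μ b * G ν c * T a b c))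
        = ∑ b, ∑ c, ∑ a, ∑ α, g ν α * G α a * (G μ b * (G ν c * T a b c)) := by
          refine Finset.sum_congr rfl fun b _ => Finset.sum_congr rfl fun c _ =>
            Finset.sum_congr rfl fun a _ => Finset.sum_congr rfl fun α _ => by ring
      _ = ∑ b, ∑ c, G μ b * (G ν c * T ν b c) :=
          Finset.sum_congr rfl fun b _ => Finset.sum_congr rfl fun c _ =>
            collapse hδ1 ν _
  calc (∑ ν, ∑ α, g ν α * (∑ a, ∑ b, ∑ c, G α a * G μ b * G ν c * T a b c))
      = ∑ ν, ∑ b, ∑ c, G μ b * (G ν c * T ν b c) := Finset.sum_congr rfl fun ν _ => step ν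
    _ = ∑ b, ∑ c, ∑ ν, G μ b * (G ν c * T ν b c) := sum3_rot _
    _ = ∑ b, G μ b * (∑ a, ∑ c, G a c * T a b c) := by
        refine Finset.sum_congr rfl fun b _ => ?_
        rw [Finset.mul_sum, Finset.sum_comm]
        refine Finset.sum_congr rfl fun a _ => ?_
        rw [Finset.mul_sum]

theorem K2 (hδ1 : ∀ x y, ∑ j, g x j * G j y = if x = y then 1 else 0)
    (T : Fin n → Fin n → Fin n → ℝ) (ν : Fin n) :
    (∑ μ, ∑ α, g μ α * (∑ a, ∑ b, ∑ c, G α a * G μ b * G ν c * T a b c))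
      = ∑ c, G ν c * (∑ a, ∑ b, G a b * T a b c) := by
  have step : ∀ μ, (∑ α, g μ α * (∑ a, ∑ b, ∑ c, G α a * G μ b * G ν c * T a b c))
      = ∑ b, ∑ c, G μ b * (G ν c * T μ b c) := by
    intro μ
    simp only [Finset.mul_sum]
    rw [sum4_rot, sum3_rot]
    calc (∑ b, ∑ c, ∑ a, ∑ α, g μ α * (G α a * G μ b * G ν c * T a b c))
        = ∑ b, ∑ c, ∑ a, ∑ α, g μ α * G α a * (G μ b * (G ν c * T a b c)) := by
          refine Finset.sum_congr rfl fun b _ => Finset.sum_congr rfl fun c _ =>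
            Finset.sum_congr rfl fun a _ => Finset.sum_congr rfl fun α _ => by ring
      _ = ∑ b, ∑ c, G μ b * (G ν c * T μ b c) :=
          Finset.sum_congr rfl fun b _ => Finset.sum_congr rfl fun c _ =>
            collapse hδ1 μ _
  calc (∑ μ, ∑ α, g μ α * (∑ a, ∑ b, ∑ c, G α a * G μ b * G ν c * T a b c))
      = ∑ μ, ∑ b, ∑ c, G μ b * (G ν c * T μ b c) := Finset.sum_congr rfl fun μ _ => step μ
    _ = ∑ b, ∑ c, ∑ μ, G μ b * (G ν c * T μ b c) := sum3_rot _
    _ = ∑ c, ∑ b, ∑ μ, G μ b * (G ν c * T μ b c) := Finset.sum_comm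
    _ = ∑ c, G ν c * (∑ a, ∑ b, G a b * T a b c) := by
        refine Finset.sum_congr rfl fun c _ => ?_
        rw [Finset.mul_sum, Finset.sum_comm]
        refine Finset.sum_congr rfl fun a _ => ?_
        rw [Finset.mul_sum]
        exact Finset.sum_congr rfl fun b _ => by ring

theorem K3 (hδ1 : ∀ x y, ∑ j, g x j * G j y = if x = y then 1 else 0)
    (hGs : ∀ i j, G i j = G j i)
    (T : Fin n → Fin n → Fin n → ℝ) (μ : Fin n) :
    (∑ ν, ∑ α, g ν α * (∑ a, ∑ b, ∑ c, G μ a * G ν b * G α c * T a b c))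
      = ∑ a, G μ a * (∑ b, ∑ c, G b c * T a b c) := by
  have step : ∀ ν, (∑ α, g ν α * (∑ a, ∑ b, ∑ c, G μ a * G ν b * G α c * T a b c))
      = ∑ a, ∑ b, G μ a * (G ν b * T a b ν) := by
    intro ν
    simp only [Finset.mul_sum]
    rw [sum4_rot]
    calc (∑ a, ∑ b, ∑ c, ∑ α, g ν α * (G μ a * G ν b * G α c * T a b c))
        = ∑ a, ∑ b, ∑ c, ∑ α, g ν α * G α c * (G μ a * (G ν b * T a b c)) := by
          refine Finset.sum_congr rfl fun a _ => Finset.sum_congr rfl fun b _ =>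
            Finset.sum_congr rfl fun c _ => Finset.sum_congr rfl fun α _ => by ring
      _ = ∑ a, ∑ b, G μ a * (G ν b * T a b ν) :=
          Finset.sum_congr rfl fun a _ => Finset.sum_congr rfl fun b _ =>
            collapse hδ1 ν _
  calc (∑ ν, ∑ α, g ν α * (∑ a, ∑ b, ∑ c, G μ a * G ν b * G α c * T a b c))
      = ∑ ν, ∑ a, ∑ b, G μ a * (G ν b * T a b ν) := Finset.sum_congr rfl fun ν _ => step ν
    _ = ∑ a, ∑ b, ∑ ν, G μ a * (G ν b * T a b ν) := sum3_rot _
    _ = ∑ a, G μ a * (∑ b, ∑ c, G b c * T a b c) := by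
        refine Finset.sum_congr rfl fun a _ => ?_
        rw [Finset.mul_sum]
        refine Finset.sum_congr rfl fun b _ => ?_
        rw [Finset.mul_sum]
        exact Finset.sum_congr rfl fun c _ => by rw [hGs c b]

theorem K4 (hδ1 : ∀ x y, ∑ j, g x j * G j y = if x = y then 1 else 0)
    (hGs : ∀ i j, G i j = G j i)
    (T : Fin n → Fin n → Fin n → ℝ) (ν : Fin n) :
    (∑ μ, ∑ α, g μ α * (∑ a, ∑ b, ∑ c, G μ a * G ν b * G α c * T a b c))
      = ∑ b, G ν b * (∑ a, ∑ c, G a c * T a b c) := by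
  have step : ∀ μ, (∑ α, g μ α * (∑ a, ∑ b, ∑ c, G μ a * G ν b * G α c * T a b c))
      = ∑ a, ∑ b, G μ a * (G ν b * T a b μ) := by
    intro μ
    simp only [Finset.mul_sum]
    rw [sum4_rot]
    calc (∑ a, ∑ b, ∑ c, ∑ α, g μ α * (G μ a * G ν b * G α c * T a b c))
        = ∑ a, ∑ b, ∑ c, ∑ α, g μ α * G α c * (G μ a * (G ν b * T a b c)) := by
          refine Finset.sum_congr rfl fun a _ => Finset.sum_congr rfl fun b _ =>
            Finset.sum_congr rfl fun c _ => Finset.sum_congr rfl fun α _ => by ring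
      _ = ∑ a, ∑ b, G μ a * (G ν b * T a b μ) :=
          Finset.sum_congr rfl fun a _ => Finset.sum_congr rfl fun b _ =>
            collapse hδ1 μ _
  calc (∑ μ, ∑ α, g μ α * (∑ a, ∑ b, ∑ c, G μ a * G ν b * G α c * T a b c))
      = ∑ μ, ∑ a, ∑ b, G μ a * (G ν b * T a b μ) := Finset.sum_congr rfl fun μ _ => step μ
    _ = ∑ a, ∑ b, ∑ μ, G μ a * (G ν b * T a b μ) := sum3_rot _
    _ = ∑ b, ∑ a, ∑ μ, G μ a * (G ν b * T a b μ) := Finset.sum_comm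
    _ = ∑ b, G ν b * (∑ a, ∑ c, G a c * T a b c) := by
        refine Finset.sum_congr rfl fun b _ => ?_
        rw [Finset.mul_sum]
        refine Finset.sum_congr rfl fun a _ => ?_
        rw [Finset.mul_sum]
        exact Finset.sum_congr rfl fun c _ => by rw [hGs c a]; ring

theorem W (hGs : ∀ i j, G i j = G j i) (v w : Fin n → ℝ) :
    ∑ μ, (∑ a, G μ a * v a) * w μ = ∑ μ, v μ * (∑ a, G μ a * w a) := by
  simp only [Finset.sum_mul, Finset.mul_sum]
  rw [Finset.sum_comm]
  exact Finset.sum_congr rfl fun x _ => Finset.sum_congr rfl fun y _ => by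
    rw [hGs y x]; ring

theorem Xg (hδ2 : ∀ x y, ∑ j, G x j * g j y = if x = y then 1 else 0)
    (hGs : ∀ i j, G i j = G j i) (v : Fin n → ℝ) (α : Fin n) :
    ∑ ν, g ν α * (∑ b, G ν b * v b) = v α := by
  have e1 : ∀ ν, g ν α * (∑ b, G ν b * v b) = ∑ b, G b ν * g ν α * v b := by
    intro ν
    rw [Finset.mul_sum]
    exact Finset.sum_congr rfl fun b _ => by rw [hGs ν b]; ring
  simp only [e1]
  rw [Finset.sum_comm]
  have e2 : ∀ b, (∑ ν, G b ν * g ν α * v b) = (if b = α then 1 else 0) * v b := by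
    intro b
    rw [← Finset.sum_mul, hδ2 b α]
  simp only [e2, ite_mul, one_mul, zero_mul]
  simp

theorem Xg2 (hδ1 : ∀ x y, ∑ j, g x j * G j y = if x = y then 1 else 0)
    (v : Fin n → ℝ) (μ : Fin n) :
    ∑ α, g μ α * (∑ b, G α b * v b) = v μ := by
  simp only [Finset.mul_sum]
  rw [Finset.sum_comm]
  rw [show (∑ b, ∑ α, g μ α * (G α b * v b)) = ∑ b, ∑ α, g μ α * G α b * v b from
    Finset.sum_congr rfl fun b _ => Finset.sum_congr rfl fun α _ => by ring]
  exact collapse hδ1 μ v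

theorem trGg (hδ1 : ∀ x y, ∑ j, g x j * G j y = if x = y then 1 else 0) :
    (∑ ν, ∑ α, g ν α * G α ν) = (n : ℝ) := by
  have : ∀ ν : Fin n, (∑ α, g ν α * G α ν) = 1 := by intro ν; rw [hδ1]; simp
  simp [this]

theorem trGg2 (hδ1 : ∀ x y, ∑ j, g x j * G j y = if x = y then 1 else 0)
    (hGs : ∀ i j, G i j = G j i) :
    (∑ μ, ∑ α, g μ α * G μ α) = (n : ℝ) := by
  rw [show (∑ μ, ∑ α, g μ α * G μ α) = ∑ μ, ∑ α, g μ α * G α μ from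
    Finset.sum_congr rfl fun μ _ => Finset.sum_congr rfl fun α _ => by rw [hGs α μ]]
  exact trGg hδ1

theorem trGg3 (hδ2 : ∀ x y, ∑ j, G x j * g j y = if x = y then 1 else 0) :
    (∑ α, ∑ μ, G α μ * g μ α) = (n : ℝ) := by
  have : ∀ α : Fin n, (∑ μ, G α μ * g μ α) = 1 := by intro α; rw [hδ2]; simp
  simp [this]

theorem F3a {ι : Type*} [Fintype ι] (f : ι → ℝ) (k : ι → ι → ℝ) :
    (∑ α, ∑ μ, ∑ ν, f μ * k α ν) = (∑ μ, f μ) * (∑ α, ∑ ν, k α ν) := by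
  rw [Finset.mul_sum]
  refine Finset.sum_congr rfl fun α _ => ?_
  rw [Finset.mul_sum]
  rw [Finset.sum_comm]
  refine Finset.sum_congr rfl fun ν _ => ?_
  rw [Finset.sum_mul]

theorem F3b {ι : Type*} [Fintype ι] (f : ι → ℝ) (k : ι → ι → ℝ) :
    (∑ α, ∑ μ, ∑ ν, f ν * k α μ) = (∑ ν, f ν) * (∑ α, ∑ μ, k α μ) := by
  rw [Finset.mul_sum]
  refine Finset.sum_congr rfl fun α _ => ?_
  rw [Finset.mul_sum]
  refine Finset.sum_congr rfl fun μ _ => ?_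
  rw [Finset.sum_mul]

theorem Vlem (hGs : ∀ i j, G i j = G j i) (A B v : Fin n → ℝ) (r r' : ℝ) :
    ∑ μ, (A μ + r * v μ) * (∑ a, G μ a * (B a + r' * v a))
      = (∑ μ, A μ * (∑ a, G μ a * B a)) + r' * (∑ μ, v μ * (∑ a, G μ a * A a))
        + r * (∑ μ, v μ * (∑ a, G μ a * B a)) + (r * r') * (∑ μ, v μ * (∑ a, G μ a * v a)) := by
  have inner : ∀ μ, (∑ a, G μ a * (B a + r' * v a))
      = (∑ a, G μ a * B a) + r' * (∑ a, G μ a * v a) := by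
    intro μ
    rw [Finset.mul_sum]
    rw [← Finset.sum_add_distrib]
    exact Finset.sum_congr rfl fun a _ => by ring
  simp only [inner]
  have expand : ∀ μ, (A μ + r * v μ) * ((∑ a, G μ a * B a) + r' * (∑ a, G μ a * v a))
      = A μ * (∑ a, G μ a * B a) + r' * ((∑ a, G μ a * v a) * A μ)
        + r * (v μ * (∑ a, G μ a * B a)) + (r * r') * (v μ * (∑ a, G μ a * v a)) := by
    intro μ; ring
  simp only [expand, Finset.sum_add_distrib, ← Finset.mul_sum]
  rw [W hGs v A]

theorem V2 (A B v : Fin n → ℝ) (r : ℝ) :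
    ∑ μ, (A μ + r * v μ) * (∑ a, G μ a * B a)
      = (∑ μ, A μ * (∑ a, G μ a * B a)) + r * (∑ μ, v μ * (∑ a, G μ a * B a)) := by
  have expand : ∀ μ, (A μ + r * v μ) * (∑ a, G μ a * B a)
      = A μ * (∑ a, G μ a * B a) + r * (v μ * (∑ a, G μ a * B a)) := by intro μ; ring
  simp only [expand, Finset.sum_add_distrib, ← Finset.mul_sum]

theorem La6 (hδ1 : ∀ x y, ∑ j, g x j * G j y = if x = y then 1 else 0)
    (v : Fin n → ℝ) :
    (∑ α, ∑ μ, ∑ ν, (v μ * g ν α) * ((∑ b, G μ b * v b) * G α ν))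
      = (∑ μ, v μ * (∑ a, G μ a * v a)) * (n : ℝ) := by
  rw [show (∑ α, ∑ μ, ∑ ν, (v μ * g ν α) * ((∑ b, G μ b * v b) * G α ν))
      = ∑ α, ∑ μ, ∑ ν, (v μ * (∑ b, G μ b * v b)) * (g ν α * G α ν) from
    Finset.sum_congr rfl fun α _ => Finset.sum_congr rfl fun μ _ =>
      Finset.sum_congr rfl fun ν _ => by ring]
  rw [F3a]
  rw [Finset.sum_comm, trGg hδ1]

theorem La9 (hδ1 : ∀ x y, ∑ j, g x j * G j y = if x = y then 1 else 0)
    (hGs : ∀ i j, G i j = G j i) (v : Fin n → ℝ) :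
    (∑ α, ∑ μ, ∑ ν, (v ν * g μ α) * ((∑ c, G ν c * v c) * G α μ))
      = (∑ μ, v μ * (∑ a, G μ a * v a)) * (n : ℝ) := by
  rw [show (∑ α, ∑ μ, ∑ ν, (v ν * g μ α) * ((∑ c, G ν c * v c) * G α μ))
      = ∑ α, ∑ μ, ∑ ν, (v ν * (∑ c, G ν c * v c)) * (g μ α * G α μ) from
    Finset.sum_congr rfl fun α _ => Finset.sum_congr rfl fun μ _ =>
      Finset.sum_congr rfl fun ν _ => by ring]
  rw [F3b]
  rw [Finset.sum_comm, trGg hδ1]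

theorem Lb8 (hδ1 : ∀ x y, ∑ j, g x j * G j y = if x = y then 1 else 0)
    (hGs : ∀ i j, G i j = G j i) (v : Fin n → ℝ) :
    (∑ α, ∑ μ, ∑ ν, (v ν * g μ α) * ((∑ c, G ν c * v c) * G μ α))
      = (∑ μ, v μ * (∑ a, G μ a * v a)) * (n : ℝ) := by
  rw [show (∑ α, ∑ μ, ∑ ν, (v ν * g μ α) * ((∑ c, G ν c * v c) * G μ α))
      = ∑ α, ∑ μ, ∑ ν, (v ν * (∑ c, G ν c * v c)) * (g μ α * G μ α) from
    Finset.sum_congr rfl fun α _ => Finset.sum_congr rfl fun μ _ =>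
      Finset.sum_congr rfl fun ν _ => by ring]
  rw [F3b]
  rw [Finset.sum_comm, trGg2 hδ1 hGs]

theorem La7 (hδ2 : ∀ x y, ∑ j, G x j * g j y = if x = y then 1 else 0)
    (hGs : ∀ i j, G i j = G j i) (v : Fin n → ℝ) :
    (∑ α, ∑ μ, ∑ ν, (v μ * g ν α) * ((∑ c, G ν c * v c) * G α μ))
      = ∑ μ, v μ * (∑ a, G μ a * v a) := by
  have step1 : ∀ α μ, (∑ ν, (v μ * g ν α) * ((∑ c, G ν c * v c) * G α μ))
      = v μ * G α μ * (∑ ν, g ν α * (∑ c, G ν c * v c)) := by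
    intro α μ
    rw [Finset.mul_sum]
    exact Finset.sum_congr rfl fun ν _ => by ring
  simp only [step1, Xg hδ2 hGs v]
  rw [Finset.sum_comm]
  refine Finset.sum_congr rfl fun μ _ => ?_
  rw [Finset.mul_sum]
  exact Finset.sum_congr rfl fun α _ => by rw [hGs α μ]; ring

theorem La8 (hδ2 : ∀ x y, ∑ j, G x j * g j y = if x = y then 1 else 0)
    (hGs : ∀ i j, G i j = G j i) (v : Fin n → ℝ) :
    (∑ α, ∑ μ, ∑ ν, (v ν * g μ α) * ((∑ b, G μ b * v b) * G α ν))
      = ∑ μ, v μ * (∑ a, G μ a * v a) := by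
  have swap : ∀ α : Fin n, (∑ μ, ∑ ν, (v ν * g μ α) * ((∑ b, G μ b * v b) * G α ν))
      = ∑ ν, ∑ μ, (v ν * g μ α) * ((∑ b, G μ b * v b) * G α ν) := fun α => Finset.sum_comm
  simp only [swap]
  have step1 : ∀ α ν, (∑ μ, (v ν * g μ α) * ((∑ b, G μ b * v b) * G α ν))
      = v ν * G α ν * (∑ μ, g μ α * (∑ b, G μ b * v b)) := by
    intro α ν
    rw [Finset.mul_sum]
    exact Finset.sum_congr rfl fun μ _ => by ring
  simp only [step1, Xg hδ2 hGs v]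
  rw [Finset.sum_comm]
  refine Finset.sum_congr rfl fun μ _ => ?_
  rw [Finset.mul_sum]
  exact Finset.sum_congr rfl fun α _ => by rw [hGs α μ]; ring

theorem Lb6 (hδ2 : ∀ x y, ∑ j, G x j * g j y = if x = y then 1 else 0)
    (hGs : ∀ i j, G i j = G j i) (v : Fin n → ℝ) :
    (∑ α, ∑ μ, ∑ ν, (v μ * g ν α) * ((∑ c, G ν c * v c) * G μ α))
      = ∑ μ, v μ * (∑ a, G μ a * v a) := by
  have step1 : ∀ α μ, (∑ ν, (v μ * g ν α) * ((∑ c, G ν c * v c) * G μ α))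
      = v μ * G μ α * (∑ ν, g ν α * (∑ c, G ν c * v c)) := by
    intro α μ
    rw [Finset.mul_sum]
    exact Finset.sum_congr rfl fun ν _ => by ring
  simp only [step1, Xg hδ2 hGs v]
  rw [Finset.sum_comm]
  refine Finset.sum_congr rfl fun μ _ => ?_
  rw [Finset.mul_sum]
  exact Finset.sum_congr rfl fun α _ => by ring

theorem Lb7 (hδ1 : ∀ x y, ∑ j, g x j * G j y = if x = y then 1 else 0)
    (v : Fin n → ℝ) :
    (∑ α, ∑ μ, ∑ ν, (v μ * g ν α) * ((∑ c, G α c * v c) * G μ ν))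
      = ∑ μ, v μ * (∑ a, G μ a * v a) := by
  rw [sum3_rot]
  have step1 : ∀ μ ν, (∑ α, (v μ * g ν α) * ((∑ c, G α c * v c) * G μ ν))
      = v μ * G μ ν * (∑ α, g ν α * (∑ c, G α c * v c)) := by
    intro μ ν
    rw [Finset.mul_sum]
    exact Finset.sum_congr rfl fun α _ => by ring
  simp only [step1, Xg2 hδ1 v]
  refine Finset.sum_congr rfl fun μ _ => ?_
  rw [Finset.mul_sum]
  exact Finset.sum_congr rfl fun ν _ => by ring

theorem Lb9 (hδ1 : ∀ x y, ∑ j, g x j * G j y = if x = y then 1 else 0)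
    (v : Fin n → ℝ) :
    (∑ α, ∑ μ, ∑ ν, (v ν * g μ α) * ((∑ c, G α c * v c) * G μ ν))
      = ∑ μ, v μ * (∑ a, G μ a * v a) := by
  rw [sum3_rot]
  have step1 : ∀ μ ν, (∑ α, (v ν * g μ α) * ((∑ c, G α c * v c) * G μ ν))
      = v ν * G μ ν * (∑ α, g μ α * (∑ c, G α c * v c)) := by
    intro μ ν
    rw [Finset.mul_sum]
    exact Finset.sum_congr rfl fun α _ => by ring
  simp only [step1, Xg2 hδ1 v]
  refine Finset.sum_congr rfl fun μ _ => ?_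
  rw [Finset.mul_sum]
  exact Finset.sum_congr rfl fun ν _ => by ring


theorem sum3_rot' {ι M : Type*} [Fintype ι] [AddCommMonoid M] (f : ι → ι → ι → M) :
    (∑ a, ∑ b, ∑ x, f a b x) = ∑ x, ∑ a, ∑ b, f a b x := (sum3_rot fun x a b => f a b x).symm

end Stmt14Aux

/-- Invariance of the general quadratic action under transformations of the
third kind: under the constraints (38)–(40) of the paper, L is invariant under
the shift of non-metricity induced by Γ^λ_{μν} → Γ^λ_{μν} + χ^λ g_{μν}
(the torsion is unchanged). -/
theorem stmt_14 (n : ℕ) (hn : 1 ≤ n)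
    (b₁ b₂ b₃ a₁ a₂ a₃ a₄ a₅ c₁ c₂ c₃ : ℝ)
    (h1 : 2 * a₂ + 4 * a₃ + ((n : ℝ) + 1) * a₅ = 0)
    (h2 : 2 * a₁ + a₂ + a₅ + ((n : ℝ) + 1) * a₄ = 0)
    (h3 : -c₁ + 2 * c₂ + ((n : ℝ) + 1) * c₃ = 0)
    (g G : Matrix (Fin n) (Fin n) ℝ)
    (hgsymm : ∀ i j, g i j = g j i) (hGsymm : ∀ i j, G i j = G j i)
    (hgG : g * G = 1) (hGg : G * g = 1)
    (S Q : Fin n → Fin n → Fin n → ℝ)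
    (hS : ∀ μ ν α, S μ ν α = - S ν μ α)
    (hQ : ∀ α μ ν, Q α μ ν = Q α ν μ)
    (χ : Fin n → ℝ) :
    quadL n b₁ b₂ b₃ a₁ a₂ a₃ a₄ a₅ c₁ c₂ c₃ G S
        (fun α μ ν => Q α μ ν + χ μ * g ν α + χ ν * g μ α)
      = quadL n b₁ b₂ b₃ a₁ a₂ a₃ a₄ a₅ c₁ c₂ c₃ G S Q := by
  have hδ1 : ∀ x y, (∑ j, g x j * G j y) = if x = y then 1 else 0 := by
    intro x y
    have := congrFun (congrFun hgG x) y
    simpa [Matrix.mul_apply, Matrix.one_apply] using this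
  have hδ2 : ∀ x y, (∑ j, G x j * g j y) = if x = y then 1 else 0 := by
    intro x y
    have := congrFun (congrFun hGg x) y
    simpa [Matrix.mul_apply, Matrix.one_apply] using this
  -- contraction with the metric of the index pairs of Q (1st–3rd and 1st–2nd)
  have hq3 : ∀ μ : Fin n, (∑ α, ∑ ν, G α ν * Q α μ ν) = ∑ α, ∑ ν, G α ν * Q α ν μ :=
    fun μ => Finset.sum_congr rfl fun α _ => Finset.sum_congr rfl fun ν _ => by rw [hQ]
  have hq4 : ∀ b : Fin n, (∑ a, ∑ c, G a c * Q a b c) = ∑ a, ∑ c, G a c * Q a c b :=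
    fun b => Finset.sum_congr rfl fun a _ => Finset.sum_congr rfl fun c _ => by rw [hQ]
  -- the shifted vectors
  have hQv' : ∀ μ, (∑ ν, ∑ α, G ν α * (Q μ ν α + χ ν * g α μ + χ α * g ν μ))
      = (∑ ν, ∑ α, G ν α * Q μ ν α) + 2 * χ μ := by
    intro μ
    have e : ∀ ν α : Fin n, G ν α * (Q μ ν α + χ ν * g α μ + χ α * g ν μ)
        = G ν α * Q μ ν α + (χ ν * (G ν α * g α μ) + χ α * (G ν α * g ν μ)) :=
      fun ν α => by ring
    simp only [e, Finset.sum_add_distrib]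
    have p1 : (∑ ν, ∑ α, χ ν * (G ν α * g α μ)) = χ μ := by
      have e1 : ∀ ν, (∑ α, χ ν * (G ν α * g α μ)) = χ ν * (if ν = μ then 1 else 0) := by
        intro ν; rw [← hδ2 ν μ, Finset.mul_sum]
      simp only [e1, mul_ite, mul_one, mul_zero]
      simp
    have p2 : (∑ ν, ∑ α, χ α * (G ν α * g ν μ)) = χ μ := by
      rw [Finset.sum_comm]
      have e1 : ∀ α, (∑ ν, χ α * (G ν α * g ν μ)) = χ α * (if α = μ then 1 else 0) := by
        intro α
        rw [← hδ2 α μ, Finset.mul_sum]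
        exact Finset.sum_congr rfl fun ν _ => by rw [hGsymm ν α]
      simp only [e1, mul_ite, mul_one, mul_zero]
      simp
    rw [p1, p2]; ring
  have hqv' : ∀ ν, (∑ α, ∑ μ, G α μ * (Q α μ ν + χ μ * g ν α + χ ν * g μ α))
      = (∑ α, ∑ μ, G α μ * Q α μ ν) + ((n : ℝ) + 1) * χ ν := by
    intro ν
    have e : ∀ α μ : Fin n, G α μ * (Q α μ ν + χ μ * g ν α + χ ν * g μ α)
        = G α μ * Q α μ ν + (g ν α * (G α μ * χ μ) + χ ν * (G α μ * g μ α)) :=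
      fun α μ => by ring
    simp only [e, Finset.sum_add_distrib]
    have p1 : (∑ α, ∑ μ, g ν α * (G α μ * χ μ)) = χ ν := by
      have e1 : ∀ α, (∑ μ, g ν α * (G α μ * χ μ)) = g ν α * (∑ b, G α b * χ b) := by
        intro α; rw [Finset.mul_sum]
      simp only [e1]
      exact Stmt14Aux.Xg2 hδ1 χ ν
    have p2 : (∑ α, ∑ μ, χ ν * (G α μ * g μ α)) = χ ν * (n : ℝ) := by
      have e1 : ∀ α, (∑ μ, χ ν * (G α μ * g μ α)) = χ ν * (∑ μ, G α μ * g μ α) := by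
        intro α; rw [Finset.mul_sum]
      simp only [e1]
      rw [← Finset.mul_sum, Stmt14Aux.trGg3 hδ2]
    rw [p1, p2]; ring
  -- the shifted raised non-metricity
  have hup' : ∀ α μ ν, (∑ a, ∑ b, ∑ c, G α a * G μ b * G ν c * (Q a b c + χ b * g c a + χ c * g b a))
      = (∑ a, ∑ b, ∑ c, G α a * G μ b * G ν c * Q a b c) + ((∑ b, G μ b * χ b) * G α ν) + ((∑ c, G ν c * χ c) * G α μ) := by
    intro α μ ν
    have e : ∀ a b c : Fin n, G α a * G μ b * G ν c * (Q a b c + χ b * g c a + χ c * g b a)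
        = G α a * G μ b * G ν c * Q a b c
          + ((G μ b * χ b) * (G α a * (G ν c * g c a)) + (G ν c * χ c) * (G α a * (G μ b * g b a))) :=
      fun a b c => by ring
    simp only [e, Finset.sum_add_distrib]
    have p1 : (∑ a, ∑ b, ∑ c, (G μ b * χ b) * (G α a * (G ν c * g c a))) = (∑ b, G μ b * χ b) * G α ν := by
      have e1 : ∀ a b : Fin n, (∑ c, (G μ b * χ b) * (G α a * (G ν c * g c a)))
          = (G μ b * χ b) * (G α a * (if ν = a then 1 else 0)) := by
        intro a b
        rw [← hδ2 ν a, Finset.mul_sum, Finset.mul_sum]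
      simp only [e1]
      have e2 : ∀ a, (∑ b, (G μ b * χ b) * (G α a * (if ν = a then 1 else 0)))
          = (∑ b, G μ b * χ b) * (G α a * (if ν = a then 1 else 0)) := by
        intro a; rw [Finset.sum_mul]
      simp only [e2, mul_ite, mul_one, mul_zero]
      simp [Finset.sum_mul]
    have p2 : (∑ a, ∑ b, ∑ c, (G ν c * χ c) * (G α a * (G μ b * g b a))) = (∑ c, G ν c * χ c) * G α μ := by
      have e0 : ∀ a, (∑ b, ∑ c, (G ν c * χ c) * (G α a * (G μ b * g b a)))
          = ∑ c, ∑ b, (G ν c * χ c) * (G α a * (G μ b * g b a)) := fun a => Finset.sum_comm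
      have e1 : ∀ a c : Fin n, (∑ b, (G ν c * χ c) * (G α a * (G μ b * g b a)))
          = (G ν c * χ c) * (G α a * (if μ = a then 1 else 0)) := by
        intro a c
        rw [← hδ2 μ a, Finset.mul_sum, Finset.mul_sum]
      simp only [e0, e1]
      have e2 : ∀ a, (∑ c, (G ν c * χ c) * (G α a * (if μ = a then 1 else 0)))
          = (∑ c, G ν c * χ c) * (G α a * (if μ = a then 1 else 0)) := by
        intro a; rw [Finset.sum_mul]
      simp only [e2, mul_ite, mul_one, mul_zero]
      simp [Finset.sum_mul]
    rw [p1, p2]; ring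
  -- evaluations of the nine a₁-pieces
  have E2ev : (∑ α, ∑ μ, ∑ ν, Q α μ ν * ((∑ b, G μ b * χ b) * G α ν)) = (∑ μ, χ μ * ∑ a, G μ a * (∑ x, ∑ y, G x y * Q x y a)) := by
    rw [Finset.sum_comm]
    have step : ∀ μ, (∑ α, ∑ ν, Q α μ ν * ((∑ b, G μ b * χ b) * G α ν))
        = (∑ b, G μ b * χ b) * (∑ α, ∑ ν, G α ν * Q α μ ν) := by
      intro μ
      rw [Finset.mul_sum]
      refine Finset.sum_congr rfl fun α _ => ?_
      rw [Finset.mul_sum]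
      exact Finset.sum_congr rfl fun ν _ => by ring
    simp only [step, hq3]
    exact Stmt14Aux.W hGsymm χ _
  have E3ev : (∑ α, ∑ μ, ∑ ν, Q α μ ν * ((∑ c, G ν c * χ c) * G α μ)) = (∑ μ, χ μ * ∑ a, G μ a * (∑ x, ∑ y, G x y * Q x y a)) := by
    rw [Stmt14Aux.sum3_rot']
    have step : ∀ ν, (∑ α, ∑ μ, Q α μ ν * ((∑ c, G ν c * χ c) * G α μ))
        = (∑ c, G ν c * χ c) * (∑ α, ∑ μ, G α μ * Q α μ ν) := by
      intro ν
      rw [Finset.mul_sum]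
      refine Finset.sum_congr rfl fun α _ => ?_
      rw [Finset.mul_sum]
      exact Finset.sum_congr rfl fun μ _ => by ring
    simp only [step]
    exact Stmt14Aux.W hGsymm χ _
  have D1ev : (∑ α, ∑ μ, ∑ ν, (χ μ * g ν α) * (∑ a, ∑ b, ∑ c, G α a * G μ b * G ν c * Q a b c)) = (∑ μ, χ μ * ∑ a, G μ a * (∑ x, ∑ y, G x y * Q x y a)) := by
    rw [Stmt14Aux.sum3_rot]
    have step : ∀ μ, (∑ ν, ∑ α, (χ μ * g ν α) * (∑ a, ∑ b, ∑ c, G α a * G μ b * G ν c * Q a b c)) = χ μ * (∑ ν, ∑ α, g ν α * (∑ a, ∑ b, ∑ c, G α a * G μ b * G ν c * Q a b c)) := by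
      intro μ
      rw [Finset.mul_sum]
      refine Finset.sum_congr rfl fun ν _ => ?_
      rw [Finset.mul_sum]
      exact Finset.sum_congr rfl fun α _ => by ring
    simp only [step, Stmt14Aux.K1 hδ1 Q, hq4]
  have D2ev : (∑ α, ∑ μ, ∑ ν, (χ ν * g μ α) * (∑ a, ∑ b, ∑ c, G α a * G μ b * G ν c * Q a b c)) = (∑ μ, χ μ * ∑ a, G μ a * (∑ x, ∑ y, G x y * Q x y a)) := by
    rw [Stmt14Aux.sum3_rot']
    have swap : ∀ ν, (∑ α, ∑ μ, (χ ν * g μ α) * (∑ a, ∑ b, ∑ c, G α a * G μ b * G ν c * Q a b c)) = ∑ μ, ∑ α, (χ ν * g μ α) * (∑ a, ∑ b, ∑ c, G α a * G μ b * G ν c * Q a b c) :=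
      fun ν => Finset.sum_comm
    have step : ∀ ν, (∑ μ, ∑ α, (χ ν * g μ α) * (∑ a, ∑ b, ∑ c, G α a * G μ b * G ν c * Q a b c)) = χ ν * (∑ μ, ∑ α, g μ α * (∑ a, ∑ b, ∑ c, G α a * G μ b * G ν c * Q a b c)) := by
      intro ν
      rw [Finset.mul_sum]
      refine Finset.sum_congr rfl fun μ _ => ?_
      rw [Finset.mul_sum]
      exact Finset.sum_congr rfl fun α _ => by ring
    simp only [swap, step, Stmt14Aux.K2 hδ1 Q]
  -- evaluations of the nine a₂-pieces
  have E2pev : (∑ α, ∑ μ, ∑ ν, Q α μ ν * ((∑ b, G ν b * χ b) * G μ α)) = (∑ μ, χ μ * ∑ a, G μ a * (∑ x, ∑ y, G x y * Q x y a)) := by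
    rw [Stmt14Aux.sum3_rot']
    have step : ∀ ν, (∑ α, ∑ μ, Q α μ ν * ((∑ b, G ν b * χ b) * G μ α))
        = (∑ b, G ν b * χ b) * (∑ α, ∑ μ, G α μ * Q α μ ν) := by
      intro ν
      rw [Finset.mul_sum]
      refine Finset.sum_congr rfl fun α _ => ?_
      rw [Finset.mul_sum]
      exact Finset.sum_congr rfl fun μ _ => by rw [hGsymm μ α]; ring
    simp only [step]
    exact Stmt14Aux.W hGsymm χ _
  have E3pev : (∑ α, ∑ μ, ∑ ν, Q α μ ν * ((∑ c, G α c * χ c) * G μ ν)) = (∑ μ, χ μ * ∑ a, G μ a * (∑ x, ∑ y, G x y * Q a x y)) := by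
    have step : ∀ α, (∑ μ, ∑ ν, Q α μ ν * ((∑ c, G α c * χ c) * G μ ν))
        = (∑ c, G α c * χ c) * (∑ μ, ∑ ν, G μ ν * Q α μ ν) := by
      intro α
      rw [Finset.mul_sum]
      refine Finset.sum_congr rfl fun μ _ => ?_
      rw [Finset.mul_sum]
      exact Finset.sum_congr rfl fun ν _ => by ring
    simp only [step]
    exact Stmt14Aux.W hGsymm χ _
  have D1pev : (∑ α, ∑ μ, ∑ ν, (χ μ * g ν α) * (∑ a, ∑ b, ∑ c, G μ a * G ν b * G α c * Q a b c)) = (∑ μ, χ μ * ∑ a, G μ a * (∑ x, ∑ y, G x y * Q a x y)) := by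
    rw [Stmt14Aux.sum3_rot]
    have step : ∀ μ, (∑ ν, ∑ α, (χ μ * g ν α) * (∑ a, ∑ b, ∑ c, G μ a * G ν b * G α c * Q a b c)) = χ μ * (∑ ν, ∑ α, g ν α * (∑ a, ∑ b, ∑ c, G μ a * G ν b * G α c * Q a b c)) := by
      intro μ
      rw [Finset.mul_sum]
      refine Finset.sum_congr rfl fun ν _ => ?_
      rw [Finset.mul_sum]
      exact Finset.sum_congr rfl fun α _ => by ring
    simp only [step, Stmt14Aux.K3 hδ1 hGsymm Q]
  have D2pev : (∑ α, ∑ μ, ∑ ν, (χ ν * g μ α) * (∑ a, ∑ b, ∑ c, G μ a * G ν b * G α c * Q a b c)) = (∑ μ, χ μ * ∑ a, G μ a * (∑ x, ∑ y, G x y * Q x y a)) := by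
    rw [Stmt14Aux.sum3_rot']
    have swap : ∀ ν, (∑ α, ∑ μ, (χ ν * g μ α) * (∑ a, ∑ b, ∑ c, G μ a * G ν b * G α c * Q a b c)) = ∑ μ, ∑ α, (χ ν * g μ α) * (∑ a, ∑ b, ∑ c, G μ a * G ν b * G α c * Q a b c) :=
      fun ν => Finset.sum_comm
    have step : ∀ ν, (∑ μ, ∑ α, (χ ν * g μ α) * (∑ a, ∑ b, ∑ c, G μ a * G ν b * G α c * Q a b c)) = χ ν * (∑ μ, ∑ α, g μ α * (∑ a, ∑ b, ∑ c, G μ a * G ν b * G α c * Q a b c)) := by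
      intro ν
      rw [Finset.mul_sum]
      refine Finset.sum_congr rfl fun μ _ => ?_
      rw [Finset.mul_sum]
      exact Finset.sum_congr rfl fun α _ => by ring
    simp only [swap, step, Stmt14Aux.K4 hδ1 hGsymm Q, hq4]
  -- evaluations of the c₁-pieces
  have CS1ev : (∑ α, ∑ μ, ∑ ν, (χ μ * g ν α) * (∑ a, ∑ b, ∑ c, G α a * G μ b * G ν c * S a b c)) = -(∑ μ, χ μ * ∑ a, G μ a * (∑ x, ∑ y, G x y * S a x y)) := by
    rw [Stmt14Aux.sum3_rot]
    have step : ∀ μ, (∑ ν, ∑ α, (χ μ * g ν α) * (∑ a, ∑ b, ∑ c, G α a * G μ b * G ν c * S a b c)) = χ μ * (∑ ν, ∑ α, g ν α * (∑ a, ∑ b, ∑ c, G α a * G μ b * G ν c * S a b c)) := by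
      intro μ
      rw [Finset.mul_sum]
      refine Finset.sum_congr rfl fun ν _ => ?_
      rw [Finset.mul_sum]
      exact Finset.sum_congr rfl fun α _ => by ring
    have hs4 : ∀ b : Fin n, (∑ a, ∑ c, G a c * S a b c) = -(∑ x, ∑ y, G x y * S b x y) := by
      intro b
      calc (∑ a, ∑ c, G a c * S a b c) = ∑ a, ∑ c, -(G a c * S b a c) :=
          Finset.sum_congr rfl fun a _ => Finset.sum_congr rfl fun c _ => by
            rw [hS a b c]; ring
        _ = -(∑ x, ∑ y, G x y * S b x y) := by simp only [Finset.sum_neg_distrib]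
    simp only [step, Stmt14Aux.K1 hδ1 S, hs4, mul_neg, Finset.sum_neg_distrib]
  have CS2ev : (∑ α, ∑ μ, ∑ ν, (χ ν * g μ α) * (∑ a, ∑ b, ∑ c, G α a * G μ b * G ν c * S a b c)) = 0 := by
    rw [Stmt14Aux.sum3_rot']
    have swap : ∀ ν, (∑ α, ∑ μ, (χ ν * g μ α) * (∑ a, ∑ b, ∑ c, G α a * G μ b * G ν c * S a b c)) = ∑ μ, ∑ α, (χ ν * g μ α) * (∑ a, ∑ b, ∑ c, G α a * G μ b * G ν c * S a b c) :=
      fun ν => Finset.sum_comm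
    have step : ∀ ν, (∑ μ, ∑ α, (χ ν * g μ α) * (∑ a, ∑ b, ∑ c, G α a * G μ b * G ν c * S a b c)) = χ ν * (∑ μ, ∑ α, g μ α * (∑ a, ∑ b, ∑ c, G α a * G μ b * G ν c * S a b c)) := by
      intro ν
      rw [Finset.mul_sum]
      refine Finset.sum_congr rfl fun μ _ => ?_
      rw [Finset.mul_sum]
      exact Finset.sum_congr rfl fun α _ => by ring
    have hzero : ∀ c : Fin n, (∑ a, ∑ b, G a b * S a b c) = 0 := by
      intro c
      have h : (∑ a, ∑ b, G a b * S a b c) = -(∑ a, ∑ b, G a b * S a b c) := by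
        calc (∑ a, ∑ b, G a b * S a b c) = ∑ b, ∑ a, G a b * S a b c := Finset.sum_comm
          _ = ∑ x, ∑ y, -(G x y * S x y c) :=
            Finset.sum_congr rfl fun x _ => Finset.sum_congr rfl fun y _ => by
              rw [hGsymm y x, hS y x c]; ring
          _ = -(∑ x, ∑ y, G x y * S x y c) := by simp only [Finset.sum_neg_distrib]
      linarith
    simp only [swap, step, Stmt14Aux.K2 hδ1 S, hzero, mul_zero, Finset.sum_const_zero]
  -- the three changed triple-sum terms
  have Ta1 : (∑ α, ∑ μ, ∑ ν, (Q α μ ν + χ μ * g ν α + χ ν * g μ α) * ((∑ a, ∑ b, ∑ c, G α a * G μ b * G ν c * Q a b c) + ((∑ b, G μ b * χ b) * G α ν) + ((∑ c, G ν c * χ c) * G α μ)))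
      = (∑ α, ∑ μ, ∑ ν, Q α μ ν * (∑ a, ∑ b, ∑ c, G α a * G μ b * G ν c * Q a b c)) + (4 * (∑ μ, χ μ * ∑ a, G μ a * (∑ x, ∑ y, G x y * Q x y a)) + 2 * ((n : ℝ) + 1) * (∑ μ, χ μ * ∑ a, G μ a * χ a)) := by
    calc (∑ α, ∑ μ, ∑ ν, (Q α μ ν + χ μ * g ν α + χ ν * g μ α) * ((∑ a, ∑ b, ∑ c, G α a * G μ b * G ν c * Q a b c) + ((∑ b, G μ b * χ b) * G α ν) + ((∑ c, G ν c * χ c) * G α μ)))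
        = ∑ α, ∑ μ, ∑ ν, (Q α μ ν * (∑ a, ∑ b, ∑ c, G α a * G μ b * G ν c * Q a b c)
            + (Q α μ ν * ((∑ b, G μ b * χ b) * G α ν) + Q α μ ν * ((∑ c, G ν c * χ c) * G α μ)
              + (χ μ * g ν α) * (∑ a, ∑ b, ∑ c, G α a * G μ b * G ν c * Q a b c) + (χ ν * g μ α) * (∑ a, ∑ b, ∑ c, G α a * G μ b * G ν c * Q a b c)
              + (χ μ * g ν α) * ((∑ b, G μ b * χ b) * G α ν) + (χ μ * g ν α) * ((∑ c, G ν c * χ c) * G α μ)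
              + (χ ν * g μ α) * ((∑ b, G μ b * χ b) * G α ν) + (χ ν * g μ α) * ((∑ c, G ν c * χ c) * G α μ))) :=
          Finset.sum_congr rfl fun α _ => Finset.sum_congr rfl fun μ _ =>
            Finset.sum_congr rfl fun ν _ => by ring
      _ = _ := by
          simp only [Finset.sum_add_distrib]
          rw [E2ev, E3ev, D1ev, D2ev, Stmt14Aux.La6 hδ1 χ, Stmt14Aux.La7 hδ2 hGsymm χ,
            Stmt14Aux.La8 hδ2 hGsymm χ, Stmt14Aux.La9 hδ1 hGsymm χ]
          ring
  have Ta2 : (∑ α, ∑ μ, ∑ ν, (Q α μ ν + χ μ * g ν α + χ ν * g μ α) * ((∑ a, ∑ b, ∑ c, G μ a * G ν b * G α c * Q a b c) + ((∑ b, G ν b * χ b) * G μ α) + ((∑ c, G α c * χ c) * G μ ν)))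
      = (∑ α, ∑ μ, ∑ ν, Q α μ ν * (∑ a, ∑ b, ∑ c, G μ a * G ν b * G α c * Q a b c)) + (2 * (∑ μ, χ μ * ∑ a, G μ a * (∑ x, ∑ y, G x y * Q x y a)) + 2 * (∑ μ, χ μ * ∑ a, G μ a * (∑ x, ∑ y, G x y * Q a x y)) + ((n : ℝ) + 3) * (∑ μ, χ μ * ∑ a, G μ a * χ a)) := by
    calc (∑ α, ∑ μ, ∑ ν, (Q α μ ν + χ μ * g ν α + χ ν * g μ α) * ((∑ a, ∑ b, ∑ c, G μ a * G ν b * G α c * Q a b c) + ((∑ b, G ν b * χ b) * G μ α) + ((∑ c, G α c * χ c) * G μ ν)))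
        = ∑ α, ∑ μ, ∑ ν, (Q α μ ν * (∑ a, ∑ b, ∑ c, G μ a * G ν b * G α c * Q a b c)
            + (Q α μ ν * ((∑ b, G ν b * χ b) * G μ α) + Q α μ ν * ((∑ c, G α c * χ c) * G μ ν)
              + (χ μ * g ν α) * (∑ a, ∑ b, ∑ c, G μ a * G ν b * G α c * Q a b c) + (χ ν * g μ α) * (∑ a, ∑ b, ∑ c, G μ a * G ν b * G α c * Q a b c)
              + (χ μ * g ν α) * ((∑ b, G ν b * χ b) * G μ α) + (χ μ * g ν α) * ((∑ c, G α c * χ c) * G μ ν)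
              + (χ ν * g μ α) * ((∑ b, G ν b * χ b) * G μ α) + (χ ν * g μ α) * ((∑ c, G α c * χ c) * G μ ν))) :=
          Finset.sum_congr rfl fun α _ => Finset.sum_congr rfl fun μ _ =>
            Finset.sum_congr rfl fun ν _ => by ring
      _ = _ := by
          simp only [Finset.sum_add_distrib]
          rw [E2pev, E3pev, D1pev, D2pev, Stmt14Aux.Lb6 hδ2 hGsymm χ, Stmt14Aux.Lb7 hδ1 χ,
            Stmt14Aux.Lb8 hδ1 hGsymm χ, Stmt14Aux.Lb9 hδ1 χ]
          ring
  have Tc1 : (∑ α, ∑ μ, ∑ ν, (Q α μ ν + χ μ * g ν α + χ ν * g μ α) * (∑ a, ∑ b, ∑ c, G α a * G μ b * G ν c * S a b c))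
      = (∑ α, ∑ μ, ∑ ν, Q α μ ν * (∑ a, ∑ b, ∑ c, G α a * G μ b * G ν c * S a b c)) - (∑ μ, χ μ * ∑ a, G μ a * (∑ x, ∑ y, G x y * S a x y)) := by
    calc (∑ α, ∑ μ, ∑ ν, (Q α μ ν + χ μ * g ν α + χ ν * g μ α) * (∑ a, ∑ b, ∑ c, G α a * G μ b * G ν c * S a b c))
        = ∑ α, ∑ μ, ∑ ν, (Q α μ ν * (∑ a, ∑ b, ∑ c, G α a * G μ b * G ν c * S a b c) + ((χ μ * g ν α) * (∑ a, ∑ b, ∑ c, G α a * G μ b * G ν c * S a b c) + (χ ν * g μ α) * (∑ a, ∑ b, ∑ c, G α a * G μ b * G ν c * S a b c))) :=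
          Finset.sum_congr rfl fun α _ => Finset.sum_congr rfl fun μ _ =>
            Finset.sum_congr rfl fun ν _ => by ring
      _ = _ := by
          simp only [Finset.sum_add_distrib]
          rw [CS1ev, CS2ev]
          ring
  -- the vector-vector terms
  have Tv3 : (∑ μ, ((∑ ν, ∑ α, G ν α * Q μ ν α) + 2 * χ μ) * (∑ a, G μ a * ((∑ ν, ∑ α, G ν α * Q a ν α) + 2 * χ a)))
      = (∑ μ, (∑ ν, ∑ α, G ν α * Q μ ν α) * (∑ a, G μ a * (∑ ν, ∑ α, G ν α * Q a ν α))) + 2 * (∑ μ, χ μ * ∑ a, G μ a * (∑ x, ∑ y, G x y * Q a x y)) + 2 * (∑ μ, χ μ * ∑ a, G μ a * (∑ x, ∑ y, G x y * Q a x y)) + 2 * 2 * (∑ μ, χ μ * ∑ a, G μ a * χ a) :=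
    Stmt14Aux.Vlem hGsymm _ _ χ 2 2
  have Tv4 : (∑ μ, ((∑ α, ∑ m, G α m * Q α m μ) + ((n : ℝ) + 1) * χ μ) * (∑ a, G μ a * ((∑ α, ∑ m, G α m * Q α m a) + ((n : ℝ) + 1) * χ a)))
      = (∑ μ, (∑ α, ∑ m, G α m * Q α m μ) * (∑ a, G μ a * (∑ α, ∑ m, G α m * Q α m a))) + ((n : ℝ) + 1) * (∑ μ, χ μ * ∑ a, G μ a * (∑ x, ∑ y, G x y * Q x y a)) + ((n : ℝ) + 1) * (∑ μ, χ μ * ∑ a, G μ a * (∑ x, ∑ y, G x y * Q x y a))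
          + ((n : ℝ) + 1) * ((n : ℝ) + 1) * (∑ μ, χ μ * ∑ a, G μ a * χ a) :=
    Stmt14Aux.Vlem hGsymm _ _ χ ((n : ℝ) + 1) ((n : ℝ) + 1)
  have Tv5 : (∑ μ, ((∑ ν, ∑ α, G ν α * Q μ ν α) + 2 * χ μ) * (∑ a, G μ a * ((∑ α, ∑ m, G α m * Q α m a) + ((n : ℝ) + 1) * χ a)))
      = (∑ μ, (∑ ν, ∑ α, G ν α * Q μ ν α) * (∑ a, G μ a * (∑ α, ∑ m, G α m * Q α m a))) + ((n : ℝ) + 1) * (∑ μ, χ μ * ∑ a, G μ a * (∑ x, ∑ y, G x y * Q a x y)) + 2 * (∑ μ, χ μ * ∑ a, G μ a * (∑ x, ∑ y, G x y * Q x y a))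
          + 2 * ((n : ℝ) + 1) * (∑ μ, χ μ * ∑ a, G μ a * χ a) :=
    Stmt14Aux.Vlem hGsymm _ _ χ 2 ((n : ℝ) + 1)
  have Tv6 : (∑ μ, ((∑ ν, ∑ α, G ν α * Q μ ν α) + 2 * χ μ) * (∑ a, G μ a * (∑ ν, ∑ α, G ν α * S a ν α)))
      = (∑ μ, (∑ ν, ∑ α, G ν α * Q μ ν α) * (∑ a, G μ a * (∑ ν, ∑ α, G ν α * S a ν α))) + 2 * (∑ μ, χ μ * ∑ a, G μ a * (∑ x, ∑ y, G x y * S a x y)) :=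
    Stmt14Aux.V2 _ _ χ 2
  have Tv7 : (∑ μ, ((∑ α, ∑ m, G α m * Q α m μ) + ((n : ℝ) + 1) * χ μ) * (∑ a, G μ a * (∑ ν, ∑ α, G ν α * S a ν α)))
      = (∑ μ, (∑ α, ∑ m, G α m * Q α m μ) * (∑ a, G μ a * (∑ ν, ∑ α, G ν α * S a ν α))) + ((n : ℝ) + 1) * (∑ μ, χ μ * ∑ a, G μ a * (∑ x, ∑ y, G x y * S a x y)) :=
    Stmt14Aux.V2 _ _ χ ((n : ℝ) + 1)
  dsimp only [quadL]
  simp only [hQv', hqv', hup']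
  rw [Ta1, Ta2, Tc1, Tv3, Tv4, Tv5, Tv6, Tv7]
  linear_combination (2 * (∑ μ, χ μ * ∑ a, G μ a * (∑ x, ∑ y, G x y * Q x y a)) + ((n : ℝ) + 1) * (∑ μ, χ μ * ∑ a, G μ a * χ a)) * h2 + ((∑ μ, χ μ * ∑ a, G μ a * (∑ x, ∑ y, G x y * Q a x y)) + (∑ μ, χ μ * ∑ a, G μ a * χ a)) * h1 + (∑ μ, χ μ * ∑ a, G μ a * (∑ x, ∑ y, G x y * S a x y)) * h3
end
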